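/- arXiv:1907.02331 — 3 statements merged into one kernel-verified Lean document; each statement's English description precedes it below -/
import Mathlib

section
/- Let Φ₁, Φ₂ be quasi-Young functions of order r₀ ∈ (0,1], ω ∈ P_E(ℝ^{2d}), F ∈ W(L^{Φ₁,Φ₂}_{(ω)}) be continuous, α, β > 0, and define c_F(k,κ) = F(αk, βκ) for k, κ ∈ ℤ^d. Then c_F ∈ ℓ^{Φ₁,Φ₂}_{(ω)}(ℤ^{2d}) and ‖c_F‖_{ℓ^{Φ₁,Φ₂}_{(ω)}} ≤ C_ω (C_α C_β)^{1/r₀} ‖F‖_{W(L^{Φ₁,Φ₂}_{(ω)})}, where C_α = ([1/α]+1)^d, C_β = ([1/β]+1)^d ([t] denoting the integer part of t), and C_ω is a constant depending only on ω. -/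
open MeasureTheory Filter
open scoped ENNReal NNReal BigOperators ComplexConjugate

noncomputable section

/-- A Young function: convex on `[0,∞)` with values in `[0,∞]`, vanishing at `0`
and tending to `∞` at `∞`. -/
structure YoungFunction : Type where
  toFun : ℝ≥0 → ℝ≥0∞
  convex' : ∀ s t₁ t₂ : ℝ≥0, s ≤ 1 →
    toFun (s * t₁ + (1 - s) * t₂) ≤ (s : ℝ≥0∞) * toFun t₁ + ((1 - s : ℝ≥0) : ℝ≥0∞) * toFun t₂
  map_zero' : toFun 0 = 0
  tendsto_top' : Tendsto toFun atTop atTop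

/-- `Φ` is a quasi-Young function of order `r`, i.e. `Φ t = Φ₀ (t ^ r)` for a
Young function `Φ₀`. -/
def IsQuasiYoung (Φ : ℝ≥0 → ℝ≥0∞) (r : ℝ) : Prop :=
  ∃ Φ₀ : YoungFunction, ∀ t : ℝ≥0, Φ t = Φ₀.toFun (t ^ r)

/-- Extension of `Φ` to `[0,∞]`. -/
def extendPhi (Φ : ℝ≥0 → ℝ≥0∞) : ℝ≥0∞ → ℝ≥0∞ :=
  fun t => if t = ∞ then ∞ else Φ t.toNNReal

/-- Luxemburg quasi-norm of an `ℝ≥0∞`-valued function. For a quasi-Young function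
`Φ` of order `r₀`, `Φ t = Φ₀ (t ^ r₀)`, this coincides with
`(inf {λ : ∫ Φ₀(G^{r₀}/λ) ≤ 1})^(1/r₀)` after the substitution `λ ↦ λ^{r₀}`. -/
def luxNorm {α : Type*} [MeasurableSpace α] (μ : Measure α) (Φ : ℝ≥0 → ℝ≥0∞)
    (G : α → ℝ≥0∞) : ℝ≥0∞ :=
  sInf {lam : ℝ≥0∞ | 0 < lam ∧ lam ≠ ∞ ∧ ∫⁻ x, extendPhi Φ (G x / lam) ∂μ ≤ 1}

/-- Mixed Luxemburg quasi-norm. -/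
def mixedLux {α β : Type*} [MeasurableSpace α] [MeasurableSpace β]
    (μ₁ : Measure α) (μ₂ : Measure β) (Φ₁ Φ₂ : ℝ≥0 → ℝ≥0∞)
    (G : α × β → ℝ≥0∞) : ℝ≥0∞ :=
  luxNorm μ₂ Φ₂ fun y => luxNorm μ₁ Φ₁ fun x => G (x, y)

/-- `|f| · ω` as an `ℝ≥0∞`-valued function. -/
def wFun {α : Type*} (ω : α → ℝ) (f : α → ℂ) : α → ℝ≥0∞ :=
  fun x => (‖f x‖₊ : ℝ≥0∞) * ENNReal.ofReal (ω x)

/-- Weighted Orlicz quasi-norm `‖f‖_{L^Φ_{(ω)}}`. -/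
def orliczNorm {α : Type*} [MeasurableSpace α] (μ : Measure α) (Φ : ℝ≥0 → ℝ≥0∞)
    (ω : α → ℝ) (f : α → ℂ) : ℝ≥0∞ :=
  luxNorm μ Φ (wFun ω f)

/-- Weighted mixed Orlicz quasi-norm `‖f‖_{L^{Φ₁,Φ₂}_{(ω)}}`. -/
def mixedNorm {α β : Type*} [MeasurableSpace α] [MeasurableSpace β]
    (μ₁ : Measure α) (μ₂ : Measure β) (Φ₁ Φ₂ : ℝ≥0 → ℝ≥0∞)
    (ω : α × β → ℝ) (f : α × β → ℂ) : ℝ≥0∞ :=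
  mixedLux μ₁ μ₂ Φ₁ Φ₂ (wFun ω f)

/-- The quasi-Young function `t ↦ t^p/p` (giving `L^p`). -/
def phiP (p : ℝ) : ℝ≥0 → ℝ≥0∞ := fun t => ((t ^ p : ℝ≥0) : ℝ≥0∞) / ENNReal.ofReal p

/-- The Young function `Φ_∞` (giving `L^∞`). -/
def phiInf : ℝ≥0 → ℝ≥0∞ := fun t => if t ≤ 1 then 0 else ∞

/-- A weight: positive, with `ω` and `1/ω` locally bounded. -/
def IsWeight {E : Type*} [NormedAddCommGroup E] (ω : E → ℝ) : Prop :=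
  (∀ x, 0 < ω x) ∧ ∀ R : ℝ, ∃ C > 0, ∀ x : E, ‖x‖ ≤ R → ω x ≤ C ∧ C⁻¹ ≤ ω x

/-- `ω` is `v`-moderate. -/
def IsModerate {E : Type*} [NormedAddCommGroup E] (ω v : E → ℝ) : Prop :=
  ∃ C > 0, ∀ x y, ω (x + y) ≤ C * ω x * v y

/-- `v` is submultiplicative (and even). -/
def IsSubmultiplicative {E : Type*} [NormedAddCommGroup E] (v : E → ℝ) : Prop :=
  IsWeight v ∧ (∀ x, v (-x) = v x) ∧ ∃ C > 0, ∀ x y, v (x + y) ≤ C * v x * v y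

/-- The class `𝒫_E` of moderate weights. -/
def InPE {E : Type*} [NormedAddCommGroup E] (ω : E → ℝ) : Prop :=
  IsWeight ω ∧ ∃ v : E → ℝ, IsSubmultiplicative v ∧ IsModerate ω v

/-- `ℝ^d`. -/
abbrev RD (d : ℕ) := Fin d → ℝ

/-- The phase space `ℝ^{2d} = ℝ^d × ℝ^d`. -/
abbrev PS (d : ℕ) := (Fin d → ℝ) × (Fin d → ℝ)

/-- Formal Hermite series (coefficients). -/
abbrev HS (d : ℕ) := (Fin d → ℕ) → ℂ

/-- Index set `ℤ^d × ℤ^d` for Gabor systems. -/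
abbrev IdxD (d : ℕ) := (Fin d → ℤ) × (Fin d → ℤ)

/-- One–dimensional Hermite function. -/
def hermite1 (n : ℕ) (x : ℝ) : ℝ :=
  Real.pi ^ (-(1:ℝ)/4) * (-1 : ℝ) ^ n * (((2:ℝ) ^ n * (n.factorial : ℝ)) ^ (-(1:ℝ)/2)) *
    Real.exp (x ^ 2 / 2) * iteratedDeriv n (fun t => Real.exp (-t ^ 2)) x

/-- `d`–dimensional Hermite function. -/
def hermiteF (d : ℕ) (α : Fin d → ℕ) (x : RD d) : ℝ := ∏ i, hermite1 (α i) (x i)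

/-- Membership of a formal Hermite series in the Pilipović distribution space
`ℋ'_♭(ℝ^d)`: `|c(α)| ≲ r^{|α|} (α!)^{1/2}` for every `r > 0`. -/
def InHFlatDual (d : ℕ) (c : HS d) : Prop :=
  ∀ r : ℝ, 0 < r → ∃ C > 0, ∀ α : Fin d → ℕ,
    ‖c α‖ ≤ C * r ^ (∑ i, α i) * Real.sqrt (∏ i, ((α i).factorial : ℝ))

/-- Euclidean dot product on `ℝ^d`. -/
def dotR {d : ℕ} (x y : RD d) : ℝ := ∑ i, x i * y i

/-- Short-time Fourier transform of a function `g` with window `φ`. -/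
def stftF (d : ℕ) (φ g : RD d → ℂ) (X : PS d) : ℂ :=
  (((2 * Real.pi) ^ (-(d:ℝ)/2) : ℝ) : ℂ) *
    ∫ y : RD d, g y * (starRingEnd ℂ) (φ (y - X.1)) *
      Complex.exp (-Complex.I * ((dotR y X.2 : ℝ) : ℂ))

/-- Standard Gaussian window. -/
def gaussW (d : ℕ) : RD d → ℂ :=
  fun x => ((Real.pi ^ (-(d:ℝ)/4) * Real.exp (-(∑ i, (x i)^2) / 2) : ℝ) : ℂ)

/-- Short-time Fourier transform of a formal Hermite series. -/
def stftD (d : ℕ) (φ : RD d → ℂ) (c : HS d) (X : PS d) : ℂ :=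
  ∑' α : Fin d → ℕ, c α * stftF d φ (fun y => ((hermiteF d α y : ℝ) : ℂ)) X

/-- Orlicz modulation quasi-norm of a formal Hermite series. -/
def modNormD (d : ℕ) (Φ₁ Φ₂ : ℝ≥0 → ℝ≥0∞) (ω : PS d → ℝ) (c : HS d) : ℝ≥0∞ :=
  mixedNorm volume volume Φ₁ Φ₂ ω (stftD d (gaussW d) c)

/-- Orlicz modulation quasi-norm of a function. -/
def modNormF (d : ℕ) (Φ₁ Φ₂ : ℝ≥0 → ℝ≥0∞) (ω : PS d → ℝ) (g : RD d → ℂ) : ℝ≥0∞ :=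
  mixedNorm volume volume Φ₁ Φ₂ ω (stftF d (gaussW d) g)

/-- `‖V_φ g · v‖_{L^p}`. -/
def stftLpNorm (d : ℕ) (p : ℝ≥0∞) (v : PS d → ℝ) (φ g : RD d → ℂ) : ℝ≥0∞ :=
  eLpNorm (fun X : PS d => ‖stftF d φ g X‖ * v X) p volume

/-- Classical modulation `L^p` quasi-norm of a function (Gaussian window). -/
def modLpNormF (d : ℕ) (p : ℝ≥0∞) (v : PS d → ℝ) (g : RD d → ℂ) : ℝ≥0∞ :=
  stftLpNorm d p v (gaussW d) g

/-- Classical modulation `L^p` quasi-norm of a formal Hermite series. -/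
def modLpNorm (d : ℕ) (p : ℝ≥0∞) (ω : PS d → ℝ) (c : HS d) : ℝ≥0∞ :=
  eLpNorm (fun X : PS d => ‖stftD d (gaussW d) c X‖ * ω X) p volume

/-- Weighted mixed Orlicz sequence quasi-norm on `ℤ^d × ℤ^d`. -/
def seqNorm (d : ℕ) (Φ₁ Φ₂ : ℝ≥0 → ℝ≥0∞) (W : IdxD d → ℝ) (a : IdxD d → ℂ) : ℝ≥0∞ :=
  mixedNorm Measure.count Measure.count Φ₁ Φ₂ W a

/-- Real vector associated with an integer vector. -/
def ivec {d : ℕ} (k : Fin d → ℤ) : RD d := fun i => (k i : ℝ)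

/-- Lattice point `(εk, εκ)` in phase space. -/
def latPt {d : ℕ} (ε : ℝ) (kκ : IdxD d) : PS d := (ε • ivec kκ.1, ε • ivec kκ.2)

/-- The unit cube `[0,1]^{2d}` of phase space. -/
def Qcube (d : ℕ) : Set (PS d) :=
  {X | (∀ i, X.1 i ∈ Set.Icc (0:ℝ) 1) ∧ ∀ i, X.2 i ∈ Set.Icc (0:ℝ) 1}

/-- Wiener amalgam quasi-norm `W(L^Φ, ℓ^{Φ₁,Φ₂}_{(ω)})` on phase space. -/
def wienerNorm (d : ℕ) (Φ ΦO₁ ΦO₂ : ℝ≥0 → ℝ≥0∞) (ω : PS d → ℝ) (F : PS d → ℂ) : ℝ≥0∞ :=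
  mixedLux Measure.count Measure.count ΦO₁ ΦO₂
    (fun kκ : IdxD d =>
      luxNorm (volume.restrict (Qcube d)) Φ (fun X : PS d => wFun ω F (X + latPt 1 kκ)))

/-- Gabor atom `e^{iε⟨·,κ⟩} φ(· − εk)`. -/
def gaborAtom (d : ℕ) (ε : ℝ) (φ : RD d → ℂ) (kκ : IdxD d) : RD d → ℂ :=
  fun x => Complex.exp (Complex.I * ((ε * dotR x (ivec kκ.2) : ℝ) : ℂ)) * φ (x - ε • ivec kκ.1)

/-- Gabor atom for a general pair of lattices given by linear bijections. -/
def gaborAtomGen (d : ℕ) (T S : RD d →ₗ[ℝ] RD d) (φ : RD d → ℂ) (kκ : IdxD d) : RD d → ℂ :=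
  fun x => Complex.exp (Complex.I * ((dotR x (S (ivec kκ.2)) : ℝ) : ℂ)) * φ (x - T (ivec kκ.1))

/-- `L²` Gabor coefficient. -/
def gaborCoefL2 (d : ℕ) (g atom : RD d → ℂ) : ℂ := ∫ y : RD d, g y * (starRingEnd ℂ) (atom y)

/-- Two families are dual (Gabor) frames of each other: reconstruction holds
in both orders for `L²` functions. -/
def AreDualGaborFramesGen (d : ℕ) (A B : IdxD d → (RD d → ℂ)) : Prop :=
  ∀ f : RD d → ℂ, MemLp f 2 volume →
    (f =ᵐ[volume] fun x => ∑' kκ : IdxD d, gaborCoefL2 d f (A kκ) * B kκ x) ∧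
    (f =ᵐ[volume] fun x => ∑' kκ : IdxD d, gaborCoefL2 d f (B kκ) * A kκ x)

/-- `{e^{iε⟨·,κ⟩}φ(·−εk)}` and `{e^{iε⟨·,κ⟩}ψ(·−εk)}` are dual frames. -/
def AreDualGaborFrames (d : ℕ) (ε : ℝ) (φ ψ : RD d → ℂ) : Prop :=
  AreDualGaborFramesGen d (gaborAtom d ε φ) (gaborAtom d ε ψ)

/-- Analysis operator `C_φ^ε` acting on a formal Hermite series. -/
def analysisOp (d : ℕ) (ε : ℝ) (φ : RD d → ℂ) (c : HS d) : IdxD d → ℂ :=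
  fun kκ => stftD d φ c (latPt ε kκ)

/-- Synthesis operator `D_ψ^ε`. -/
def synthesisOp (d : ℕ) (ε : ℝ) (ψ : RD d → ℂ) (a : IdxD d → ℂ) : RD d → ℂ :=
  fun x => ∑' kκ : IdxD d, a kκ * gaborAtom d ε ψ kκ x

/-- Hermite coefficients of a function. -/
def toCoef (d : ℕ) (g : RD d → ℂ) : HS d :=
  fun α => ∫ x : RD d, g x * ((hermiteF d α x : ℝ) : ℂ)

/-- `L²`-pairing of a formal Hermite series with a function. -/
def distPairing (d : ℕ) (f : HS d) (g : RD d → ℂ) : ℂ :=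
  ∑' α : Fin d → ℕ, f α * (starRingEnd ℂ) (toCoef d g α)

/-- `ℂ^d`. -/
abbrev CD (d : ℕ) := Fin d → ℂ

/-- The Bargmann kernel `𝔄_d(z,y)`. -/
def bargmannKernel (d : ℕ) (z : CD d) (y : RD d) : ℂ :=
  ((Real.pi ^ (-(d:ℝ)/4) : ℝ) : ℂ) *
    Complex.exp (-(∑ i, (z i)^2 + ((∑ i, (y i)^2 : ℝ) : ℂ)) / 2 +
      ((Real.sqrt 2 : ℝ) : ℂ) * ∑ i, z i * ((y i : ℝ) : ℂ))

/-- The Bargmann transform of a formal Hermite series. -/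
def bargmann (d : ℕ) (c : HS d) (z : CD d) : ℂ :=
  ∑' α : Fin d → ℕ, c α * ∫ y : RD d, bargmannKernel d z y * ((hermiteF d α y : ℝ) : ℂ)

/-- The quasi-norm of `B^{Φ₁,Φ₂}_{(ω)}(ℂ^d)`. -/
def BNorm (d : ℕ) (Φ₁ Φ₂ : ℝ≥0 → ℝ≥0∞) (ω : PS d → ℝ) (F : CD d → ℂ) : ℝ≥0∞ :=
  luxNorm volume Φ₂ (fun ξ : RD d =>
    ENNReal.ofReal ((2 * Real.pi) ^ (-(d:ℝ)/2) * Real.exp (-(∑ i, (ξ i)^2) / 2)) *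
      luxNorm volume Φ₁ (fun x : RD d =>
        (‖F (fun i => ((((2:ℝ) ^ (-(1:ℝ)/2) : ℝ) : ℂ)) * (((x i : ℝ) : ℂ) - Complex.I * ((ξ i : ℝ) : ℂ)))‖₊ : ℝ≥0∞) *
          ENNReal.ofReal (Real.exp (-(∑ i, (x i)^2) / 4) * ω (x, ξ))))

/-- Entire functions on `ℂ^d`. -/
def Entire (d : ℕ) (F : CD d → ℂ) : Prop := AnalyticOnNhd ℂ F Set.univ

/-- The Gelfand–Shilov space `Σ₁`. -/
def InSigma1 {E : Type*} [NormedAddCommGroup E] [NormedSpace ℝ E] (f : E → ℂ) : Prop :=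
  ContDiff ℝ (⊤ : ℕ∞) f ∧ ∀ h : ℝ, 0 < h → ∃ C > 0, ∀ (n m : ℕ) (x : E),
    ‖x‖ ^ m * ‖iteratedFDeriv ℝ n f x‖ ≤ C * h ^ (n + m) * (n.factorial : ℝ) * (m.factorial : ℝ)

/-- `(P, N)` is a quasi-Banach space of order `r₀`: some equivalent quasi-norm
satisfies the `r₀`-power triangle inequality, and the space is complete. -/
def IsQuasiBanachOfOrder {V : Type*} [AddCommGroup V] [Module ℂ V]
    (P : V → Prop) (N : V → ℝ≥0∞) (r₀ : ℝ) : Prop :=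
  (∃ N' : V → ℝ≥0∞,
      (∀ (c : ℂ) (f : V), N' (c • f) = (‖c‖₊ : ℝ≥0∞) * N' f) ∧
      (∀ f g : V, N' (f + g) ^ r₀ ≤ N' f ^ r₀ + N' g ^ r₀) ∧
      ∃ C : ℝ≥0∞, 0 < C ∧ C ≠ ∞ ∧ ∀ f : V, P f → N f ≤ C * N' f ∧ N' f ≤ C * N f) ∧
  ∀ u : ℕ → V, (∀ n, P (u n)) →
    (∀ δ : ℝ≥0∞, 0 < δ → ∃ M : ℕ, ∀ m n, M ≤ m → M ≤ n → N (u m - u n) < δ) →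
    ∃ v : V, P v ∧ Tendsto (fun n => N (u n - v)) atTop (nhds 0)

/-- An (abstract) quasi-Banach space of order `r₀` of elements of `V`. -/
structure QBSpace (V : Type*) [AddCommGroup V] [Module ℂ V] (r₀ : ℝ) where
  Mem : V → Prop
  N : V → ℝ≥0∞
  mem_add : ∀ f g, Mem f → Mem g → Mem (f + g)
  mem_smul : ∀ (c : ℂ) f, Mem f → Mem (c • f)
  norm_smul : ∀ (c : ℂ) (f : V), N (c • f) = (‖c‖₊ : ℝ≥0∞) * N f
  triangle : ∀ f g, Mem f → Mem g → N (f + g) ^ r₀ ≤ N f ^ r₀ + N g ^ r₀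
  finite : ∀ f, Mem f → N f < ∞
  complete : ∀ u : ℕ → V, (∀ n, Mem (u n)) →
    (∀ δ : ℝ≥0∞, 0 < δ → ∃ M : ℕ, ∀ m n, M ≤ m → M ≤ n → N (u m - u n) < δ) →
    ∃ v : V, Mem v ∧ Tendsto (fun n => N (u n - v)) atTop (nhds 0)

/-- Weighted `ℓ^r` quasi-norm. -/
def ellRNorm {ι : Type*} (r : ℝ) (W : ι → ℝ) (a : ι → ℂ) : ℝ≥0∞ :=
  (∑' k, ((‖a k‖₊ : ℝ≥0∞) * ENNReal.ofReal (W k)) ^ r) ^ (1 / r)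

/-- Discrete convolution. -/
def discConv {ι : Type*} [AddGroup ι] (a b : ι → ℂ) : ι → ℂ :=
  fun n => ∑' k, a k * b (n - k)

/-- Semi-discrete convolution on phase space with step `ε`. -/
def semiConv (d : ℕ) (ε : ℝ) (a : IdxD d → ℂ) (F : PS d → ℂ) : PS d → ℂ :=
  fun X => ∑' kκ : IdxD d, a kκ * F (X - latPt ε kκ)

/-- Convolution on phase space. -/
def convPS (d : ℕ) (F G : PS d → ℂ) : PS d → ℂ :=
  fun X => ∫ Y : PS d, F Y * G (X - Y)

/-- Density of the Schwartz space in `L^{Φ₁,Φ₂}(ℝ^{2d})`. -/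
def SchwartzDensePS (d : ℕ) (Φ₁ Φ₂ : ℝ≥0 → ℝ≥0∞) : Prop :=
  ∀ f : PS d → ℂ, Measurable f → mixedNorm volume volume Φ₁ Φ₂ (fun _ => 1) f ≠ ∞ →
    ∀ δ : ℝ≥0∞, 0 < δ → ∃ g : SchwartzMap (PS d) ℂ,
      mixedNorm volume volume Φ₁ Φ₂ (fun _ => 1) (fun X => f X - g X) < δ


section Aux

private lemma young_mono (Φ₀ : YoungFunction) : Monotone Φ₀.toFun := by
  intro t₁ t₂ h
  rcases eq_or_ne t₂ 0 with rfl | h2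
  · have : t₁ = 0 := le_antisymm h zero_le
    simp [this]
  · have hs : t₁ / t₂ ≤ 1 := by
      rw [div_le_one (zero_lt_iff.mpr h2)]
      exact h
    have hc := Φ₀.convex' (t₁ / t₂) t₂ 0 hs
    rw [mul_zero, add_zero, div_mul_cancel₀ _ h2, Φ₀.map_zero', mul_zero, add_zero] at hc
    refine hc.trans (mul_le_of_le_one_left zero_le ?_)
    exact_mod_cast hs

private lemma young_div (Φ₀ : YoungFunction) (c : ℝ≥0) (hc : 1 ≤ c) (t : ℝ≥0) :
    (c : ℝ≥0∞) * Φ₀.toFun (t / c) ≤ Φ₀.toFun t := by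
  have hc0 : c ≠ 0 := by
    intro h; rw [h] at hc; exact absurd hc (by norm_num)
  have hs : c⁻¹ ≤ 1 := by
    rw [← inv_one]
    exact inv_anti₀ one_pos hc
  have hcv := Φ₀.convex' c⁻¹ t 0 hs
  rw [mul_zero, add_zero, Φ₀.map_zero', mul_zero, add_zero] at hcv
  have hdiv : t / c = c⁻¹ * t := by rw [div_eq_mul_inv, mul_comm]
  rw [hdiv]
  calc (c : ℝ≥0∞) * Φ₀.toFun (c⁻¹ * t)
      ≤ (c : ℝ≥0∞) * (((c⁻¹ : ℝ≥0) : ℝ≥0∞) * Φ₀.toFun t) := mul_le_mul_right hcv _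
    _ = (((c * c⁻¹ : ℝ≥0) : ℝ≥0∞)) * Φ₀.toFun t := by
        rw [← mul_assoc, ← ENNReal.coe_mul]
    _ = Φ₀.toFun t := by rw [mul_inv_cancel₀ hc0, ENNReal.coe_one, one_mul]

private lemma ennreal_div_mul (x p q : ℝ≥0∞) (hp0 : p ≠ 0) (hpt : p ≠ ⊤) :
    x / (p * q) = x / q / p := by
  rw [div_eq_mul_inv x, ENNReal.mul_inv (Or.inl hp0) (Or.inl hpt),
    div_eq_mul_inv, div_eq_mul_inv, mul_comm p⁻¹ q⁻¹, ← mul_assoc]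

private lemma extendPhi_mono {Φ : ℝ≥0 → ℝ≥0∞} (hΦ : Monotone Φ) : Monotone (extendPhi Φ) := by
  intro x y hxy
  by_cases hy : y = ⊤
  · simp [extendPhi, hy]
  · have hx : x ≠ ⊤ := fun h => hy (top_le_iff.mp (h ▸ hxy))
    simp only [extendPhi, if_neg hx, if_neg hy]
    exact hΦ (ENNReal.toNNReal_mono hy hxy)

private def mulIso (c : ℝ≥0∞) (h0 : c ≠ 0) (ht : c ≠ ⊤) : ℝ≥0∞ ≃o ℝ≥0∞ where
  toFun x := c * x
  invFun x := c⁻¹ * x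
  left_inv x := by
    show c⁻¹ * (c * x) = x
    rw [← mul_assoc, ENNReal.inv_mul_cancel h0 ht, one_mul]
  right_inv x := by
    show c * (c⁻¹ * x) = x
    rw [← mul_assoc, ENNReal.mul_inv_cancel h0 ht, one_mul]
  map_rel_iff' := by
    intro a b
    exact ENNReal.mul_le_mul_iff_right h0 ht

private lemma mul_sInf' (c : ℝ≥0∞) (h0 : c ≠ 0) (ht : c ≠ ⊤) (S : Set ℝ≥0∞) :
    c * sInf S = sInf ((fun x => c * x) '' S) := by
  have h := (mulIso c h0 ht).map_sInf S
  rw [sInf_image]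
  exact h

private lemma luxNorm_mono {α : Type*} [MeasurableSpace α] (μ : MeasureTheory.Measure α)
    {Φ : ℝ≥0 → ℝ≥0∞} (hΦ : Monotone Φ) {G H : α → ℝ≥0∞} (h : ∀ x, G x ≤ H x) :
    luxNorm μ Φ G ≤ luxNorm μ Φ H := by
  apply sInf_le_sInf
  rintro lam ⟨h1, h2, h3⟩
  exact ⟨h1, h2, le_trans (MeasureTheory.lintegral_mono fun x =>
    extendPhi_mono hΦ (ENNReal.div_le_div_right (h x) _)) h3⟩

private lemma luxNorm_smul_le {α : Type*} [MeasurableSpace α] (μ : MeasureTheory.Measure α)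
    (Φ : ℝ≥0 → ℝ≥0∞) (c : ℝ≥0∞) (h0 : c ≠ 0) (ht : c ≠ ⊤) (G : α → ℝ≥0∞) :
    luxNorm μ Φ (fun x => c * G x) ≤ c * luxNorm μ Φ G := by
  unfold luxNorm
  rw [mul_sInf' c h0 ht]
  apply sInf_le_sInf
  rintro y ⟨lam, ⟨h1, h2, h3⟩, rfl⟩
  refine ⟨ENNReal.mul_pos h0 h1.ne', ENNReal.mul_ne_top ht h2, ?_⟩
  have heq : ∀ x, c * G x / (c * lam) = G x / lam := fun x =>
    ENNReal.mul_div_mul_left _ _ h0 ht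
  simp only [heq]
  exact h3

private lemma tsum_comp_le_mul {ι ι' : Type*} (j : ι → ι') (M : ℕ)
    (hfib : ∀ i', ∃ s : Finset ι, (∀ i, j i = i' → i ∈ s) ∧ s.card ≤ M)
    (f : ι' → ℝ≥0∞) : ∑' i, f (j i) ≤ (M : ℝ≥0∞) * ∑' i', f i' := by
  classical
  rw [ENNReal.tsum_eq_iSup_sum]
  refine iSup_le fun t => ?_
  rw [Finset.sum_comp]
  calc ∑ i' ∈ t.image j, (t.filter fun i => j i = i').card • f i'
      ≤ ∑ i' ∈ t.image j, (M : ℝ≥0∞) * f i' := by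
        refine Finset.sum_le_sum fun i' _ => ?_
        rw [nsmul_eq_mul]
        refine mul_le_mul_left ?_ _
        obtain ⟨s, hs, hcard⟩ := hfib i'
        have hsub : (t.filter fun i => j i = i') ⊆ s := fun i hi =>
          hs i (Finset.mem_filter.mp hi).2
        exact_mod_cast (Finset.card_le_card hsub).trans hcard
    _ = (M : ℝ≥0∞) * ∑ i' ∈ t.image j, f i' := (Finset.mul_sum _ _ _).symm
    _ ≤ (M : ℝ≥0∞) * ∑' i', f i' := mul_le_mul_right (ENNReal.sum_le_tsum _) _

private lemma luxNorm_refold {ι ι' : Type*} [MeasurableSpace ι] [MeasurableSpace ι']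
    [MeasurableSingletonClass ι] [MeasurableSingletonClass ι']
    {Φ : ℝ≥0 → ℝ≥0∞} {r₀ : ℝ} (hr : 0 < r₀) (Φ₀ : YoungFunction)
    (hΦ : ∀ t, Φ t = Φ₀.toFun (t ^ r₀))
    (j : ι → ι') (M : ℕ) (hM : 0 < M)
    (hfib : ∀ i', ∃ s : Finset ι, (∀ i, j i = i' → i ∈ s) ∧ s.card ≤ M)
    (b : ι → ℝ≥0∞) (a : ι' → ℝ≥0∞) (hba : ∀ i, b i ≤ a (j i)) :
    luxNorm MeasureTheory.Measure.count Φ b ≤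
      (M : ℝ≥0∞) ^ (1/r₀ : ℝ) * luxNorm MeasureTheory.Measure.count Φ a := by
  have hM0 : (M : ℝ≥0∞) ≠ 0 := by exact_mod_cast hM.ne'
  have hMt : (M : ℝ≥0∞) ≠ ⊤ := ENNReal.natCast_ne_top M
  have hp0 : (M : ℝ≥0∞) ^ (1/r₀ : ℝ) ≠ 0 :=
    (ENNReal.rpow_pos (zero_lt_iff.mpr hM0) hMt).ne'
  have hpt : (M : ℝ≥0∞) ^ (1/r₀ : ℝ) ≠ ⊤ :=
    ENNReal.rpow_ne_top_of_nonneg (by positivity) hMt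
  have hΦmono : Monotone Φ := fun s t hst => by
    rw [hΦ, hΦ]; exact young_mono Φ₀ (NNReal.rpow_le_rpow hst hr.le)
  unfold luxNorm
  rw [mul_sInf' _ hp0 hpt]
  apply sInf_le_sInf
  rintro y ⟨lam, ⟨hl0, hlt, hint⟩, rfl⟩
  rw [MeasureTheory.lintegral_count] at hint
  have hl0' : lam ≠ 0 := hl0.ne'
  refine ⟨ENNReal.mul_pos hp0 hl0', ENNReal.mul_ne_top hpt hlt, ?_⟩
  rw [MeasureTheory.lintegral_count]
  have claim : ∀ x : ℝ≥0∞,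
      (M : ℝ≥0∞) * extendPhi Φ (x / ((M : ℝ≥0∞) ^ (1/r₀ : ℝ) * lam)) ≤ extendPhi Φ (x / lam) := by
    intro x
    by_cases hx : x = ⊤
    · have hxd : x / lam = ⊤ := by
        rw [hx, ENNReal.top_div]
        simp [hlt]
      rw [hxd]
      simp [extendPhi]
    · have hxl : x / lam ≠ ⊤ := (ENNReal.div_lt_top hx hl0').ne
      have hxl2 : x / ((M : ℝ≥0∞) ^ (1/r₀ : ℝ) * lam) ≠ ⊤ :=
        (ENNReal.div_lt_top hx (mul_ne_zero hp0 hl0')).ne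
      have hsplit : x / ((M : ℝ≥0∞) ^ (1/r₀ : ℝ) * lam)
          = (x / lam) / ((M : ℝ≥0∞) ^ (1/r₀ : ℝ)) :=
        ennreal_div_mul x _ lam hp0 hpt
      have hMpos : 0 < (M : ℝ≥0) := by exact_mod_cast hM
      have hMz0 : ((M : ℝ≥0) ^ (1/r₀ : ℝ) : ℝ≥0) ≠ 0 := (NNReal.rpow_pos hMpos).ne'
      have hMz : ((M : ℝ≥0∞) ^ (1/r₀ : ℝ)) = (((M : ℝ≥0) ^ (1/r₀ : ℝ) : ℝ≥0) : ℝ≥0∞) := by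
        rw [ENNReal.coe_rpow_of_ne_zero (Nat.cast_ne_zero.mpr hM.ne'), ENNReal.coe_natCast]
      have htn : (x / ((M : ℝ≥0∞) ^ (1/r₀ : ℝ) * lam)).toNNReal
          = (x / lam).toNNReal / ((M : ℝ≥0) ^ (1/r₀ : ℝ)) := by
        rw [hsplit, ← ENNReal.coe_toNNReal hxl, hMz, ← ENNReal.coe_div hMz0]
        simp
      have hval : extendPhi Φ (x / ((M : ℝ≥0∞) ^ (1/r₀ : ℝ) * lam))
          = Φ₀.toFun (((x / lam).toNNReal ^ (r₀ : ℝ)) / (M : ℝ≥0)) := by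
        show (if _ = ⊤ then ⊤ else Φ _) = _
        rw [if_neg hxl2, htn, hΦ, NNReal.div_rpow, ← NNReal.rpow_mul,
          one_div, inv_mul_cancel₀ hr.ne', NNReal.rpow_one]
      have hval2 : extendPhi Φ (x / lam) = Φ₀.toFun ((x / lam).toNNReal ^ (r₀ : ℝ)) := by
        show (if _ = ⊤ then ⊤ else Φ _) = _
        rw [if_neg hxl, hΦ]
      rw [hval, hval2]
      exact_mod_cast young_div Φ₀ (M : ℝ≥0) (by exact_mod_cast hM) _
  calc ∑' i, extendPhi Φ (b i / ((M : ℝ≥0∞) ^ (1/r₀ : ℝ) * lam))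
      ≤ ∑' i, extendPhi Φ (a (j i) / ((M : ℝ≥0∞) ^ (1/r₀ : ℝ) * lam)) :=
        ENNReal.tsum_le_tsum fun i =>
          extendPhi_mono hΦmono (ENNReal.div_le_div_right (hba i) _)
    _ ≤ (M : ℝ≥0∞) * ∑' i', extendPhi Φ (a i' / ((M : ℝ≥0∞) ^ (1/r₀ : ℝ) * lam)) :=
        tsum_comp_le_mul j M hfib _
    _ = ∑' i', (M : ℝ≥0∞) * extendPhi Φ (a i' / ((M : ℝ≥0∞) ^ (1/r₀ : ℝ) * lam)) :=
        ENNReal.tsum_mul_left.symm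
    _ ≤ ∑' i', extendPhi Φ (a i' / lam) := ENNReal.tsum_le_tsum fun i' => claim _
    _ ≤ 1 := hint

private lemma extendPhi_phiInf_eq_top {a lam : ℝ≥0∞} (h0 : lam ≠ 0) (ht : lam ≠ ⊤)
    (h : lam < a) : extendPhi phiInf (a / lam) = ⊤ := by
  by_cases hd : a / lam = ⊤
  · simp [extendPhi, hd]
  · have h1 : ¬ ((a / lam).toNNReal ≤ 1) := by
      intro hle
      have hle2 : a / lam ≤ 1 := by
        rw [← ENNReal.coe_toNNReal hd]
        exact_mod_cast hle
      have := (ENNReal.div_le_iff h0 ht).mp hle2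
      rw [one_mul] at this
      exact absurd this h.not_ge
    show (if _ = ⊤ then ⊤ else phiInf _) = ⊤
    rw [if_neg hd]
    show (if ((a/lam).toNNReal ≤ 1) then (0:ℝ≥0∞) else ⊤) = ⊤
    rw [if_neg h1]

private lemma floor_mem_Icc (γ : ℝ) (hγ : 0 < γ) (m n : ℤ) (h : ⌊γ * (n : ℝ)⌋ = m) :
    n ∈ Finset.Icc ⌈(m : ℝ)/γ⌉ (⌈(m : ℝ)/γ⌉ + (Nat.floor (1/γ) : ℤ)) := by
  have h1 : (m : ℝ) ≤ γ * n := by rw [← h]; exact Int.floor_le _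
  have h2 : γ * n < (m : ℝ) + 1 := by
    have h3 := Int.lt_floor_add_one (γ * (n : ℝ))
    rw [h] at h3
    exact_mod_cast h3
  rw [Finset.mem_Icc]
  constructor
  · refine Int.ceil_le.mpr ?_
    rw [div_le_iff₀ hγ]
    linarith
  · have hc : (m : ℝ)/γ ≤ ⌈(m : ℝ)/γ⌉ := Int.le_ceil _
    have hn : (n : ℝ) < (⌈(m : ℝ)/γ⌉ : ℝ) + 1/γ := by
      have hn1 : (n : ℝ) < ((m : ℝ) + 1)/γ := by rw [lt_div_iff₀ hγ]; linarith
      have hn2 : ((m : ℝ) + 1)/γ = (m : ℝ)/γ + 1/γ := by ring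
      linarith
    have hfl : ((n - ⌈(m : ℝ)/γ⌉ : ℤ) : ℝ) ≤ 1/γ := by push_cast; linarith
    have hnat : ((Nat.floor (1/γ) : ℤ)) = ⌊(1 : ℝ)/γ⌋ := by
      rw [← Int.floor_toNat, Int.toNat_of_nonneg (Int.floor_nonneg.mpr (by positivity))]
    have hle : n - ⌈(m : ℝ)/γ⌉ ≤ (Nat.floor (1/γ) : ℤ) := by
      rw [hnat]
      exact Int.le_floor.mpr hfl
    omega

private lemma fold_fiber (d : ℕ) (γ : ℝ) (hγ : 0 < γ) (m : Fin d → ℤ) :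
    ∃ s : Finset (Fin d → ℤ), (∀ k : Fin d → ℤ, (fun i => ⌊γ * (k i : ℝ)⌋) = m → k ∈ s) ∧
      s.card ≤ (Nat.floor (1/γ) + 1) ^ d := by
  classical
  refine ⟨Fintype.piFinset (fun i => Finset.Icc ⌈((m i) : ℝ)/γ⌉
    (⌈((m i) : ℝ)/γ⌉ + (Nat.floor (1/γ) : ℤ))), ?_, ?_⟩
  · intro k hk
    rw [Fintype.mem_piFinset]
    intro i
    exact floor_mem_Icc γ hγ (m i) (k i) (congrFun hk i)
  · rw [Fintype.card_piFinset]
    apply le_of_eq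
    have hcard : ∀ i : Fin d, (Finset.Icc ⌈((m i) : ℝ)/γ⌉
        (⌈((m i) : ℝ)/γ⌉ + (Nat.floor (1/γ) : ℤ))).card = Nat.floor (1/γ) + 1 := by
      intro i
      rw [Int.card_Icc]
      omega
    simp only [hcard, Finset.prod_const, Finset.card_univ, Fintype.card_fin]

end Aux

section Aux2

private lemma sample_le (d : ℕ) (ω v : PS d → ℝ) (hωpos : ∀ x, 0 < ω x)
    (Cm Cv : ℝ) (hCm : 0 < Cm) (hCv : 0 < Cv)
    (hmod : ∀ x y, ω (x + y) ≤ Cm * ω x * v y)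
    (hvb : ∀ x : PS d, ‖x‖ ≤ 2 → v x ≤ Cv)
    (F : PS d → ℂ) (hF : Continuous F) (L : PS d) (X₀ : PS d)
    (h1 : ∀ i, X₀.1 i ∈ Set.Ico (0:ℝ) 1) (h2 : ∀ i, X₀.2 i ∈ Set.Ico (0:ℝ) 1) :
    wFun ω F (X₀ + L) ≤ ENNReal.ofReal (Cm * Cv) *
      luxNorm (volume.restrict (Qcube d)) phiInf (fun X => wFun ω F (X + L)) := by
  have hCmCv : (0:ℝ) < Cm * Cv := mul_pos hCm hCv
  have hc0 : ENNReal.ofReal (Cm * Cv) ≠ 0 := (ENNReal.ofReal_pos.mpr hCmCv).ne'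
  unfold luxNorm
  rw [mul_sInf' _ hc0 ENNReal.ofReal_ne_top]
  apply le_sInf
  rintro y ⟨lam, ⟨hl0, hlt, hint⟩, rfl⟩
  set Y₀ := X₀ + L with hY₀
  have hwf : ∀ Y : PS d, wFun ω F Y = ENNReal.ofReal (‖F Y‖ * ω Y) := by
    intro Y
    rw [wFun, ENNReal.ofReal_mul (norm_nonneg _), ← ENNReal.ofReal_coe_nnreal, coe_nnnorm]
  rw [hwf Y₀]
  by_contra hcon
  push_neg at hcon
  have hPpos : 0 < ‖F Y₀‖ * ω Y₀ := ENNReal.ofReal_pos.mp (lt_of_le_of_lt zero_le hcon)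
  have hlam : lam = ENNReal.ofReal lam.toReal := (ENNReal.ofReal_toReal hlt).symm
  have hltnn : 0 ≤ lam.toReal := ENNReal.toReal_nonneg
  have hkey : Cm * Cv * lam.toReal < ‖F Y₀‖ * ω Y₀ := by
    rw [hlam, ← ENNReal.ofReal_mul hCmCv.le] at hcon
    exact (ENNReal.ofReal_lt_ofReal_iff hPpos).mp hcon
  have hω₀pos : 0 < ω Y₀ := hωpos _
  set ε := (‖F Y₀‖ * ω Y₀ - Cm * Cv * lam.toReal) / (2 * ω Y₀) with hε
  have hεpos : 0 < ε := div_pos (by linarith) (by linarith)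
  obtain ⟨δ, hδ, hball⟩ := Metric.continuousAt_iff.mp (hF.continuousAt (x := Y₀)) ε hεpos
  set e : PS d := (fun i => min (δ/2) (1 - X₀.1 i), fun i => min (δ/2) (1 - X₀.2 i)) with he
  have he1 : ∀ i, 0 < e.1 i := fun i => lt_min (by linarith) (by linarith [(h1 i).2])
  have he2 : ∀ i, 0 < e.2 i := fun i => lt_min (by linarith) (by linarith [(h2 i).2])
  set B := Set.Icc X₀ (X₀ + e) with hB
  have hBmeas : MeasurableSet B := measurableSet_Icc
  have hBsub : B ⊆ Qcube d := by
    rintro X ⟨hXl, hXr⟩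
    constructor
    · intro i
      have hup : X.1 i ≤ X₀.1 i + e.1 i := hXr.1 i
      have hm2 : e.1 i ≤ 1 - X₀.1 i := min_le_right _ _
      exact ⟨le_trans (h1 i).1 (hXl.1 i), by linarith⟩
    · intro i
      have hup : X.2 i ≤ X₀.2 i + e.2 i := hXr.2 i
      have hm2 : e.2 i ≤ 1 - X₀.2 i := min_le_right _ _
      exact ⟨le_trans (h2 i).1 (hXl.2 i), by linarith⟩
  have hBvol : volume B ≠ 0 := by
    rw [hB, Set.Icc_prod_eq, Measure.volume_eq_prod, Measure.prod_prod,
      ← Set.pi_univ_Icc, volume_pi_pi, ← Set.pi_univ_Icc, volume_pi_pi]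
    refine mul_ne_zero ?_ ?_
    · rw [Finset.prod_ne_zero_iff]
      intro i _
      rw [Real.volume_Icc]
      refine (ENNReal.ofReal_pos.mpr ?_).ne'
      have := he1 i
      show (0:ℝ) < (X₀ + e).1 i - X₀.1 i
      have hh : (X₀ + e).1 i = X₀.1 i + e.1 i := rfl
      rw [hh]; linarith
    · rw [Finset.prod_ne_zero_iff]
      intro i _
      rw [Real.volume_Icc]
      refine (ENNReal.ofReal_pos.mpr ?_).ne'
      have := he2 i
      show (0:ℝ) < (X₀ + e).2 i - X₀.2 i
      have hh : (X₀ + e).2 i = X₀.2 i + e.2 i := rfl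
      rw [hh]; linarith
  have hlow : ∀ X, X ∈ B → lam < wFun ω F (X + L) := by
    rintro X ⟨hXl, hXr⟩
    have hb1 : ∀ i, dist (X.1 i) (X₀.1 i) < δ ∧ dist (X.1 i) (X₀.1 i) ≤ 1 := by
      intro i
      have h0' : X₀.1 i ≤ X.1 i := hXl.1 i
      have hup : X.1 i ≤ X₀.1 i + e.1 i := hXr.1 i
      have hm1 : e.1 i ≤ δ/2 := min_le_left _ _
      have hm2 : e.1 i ≤ 1 - X₀.1 i := min_le_right _ _
      rw [Real.dist_eq, abs_of_nonneg (by linarith)]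
      exact ⟨by linarith, by linarith [(h1 i).1]⟩
    have hb2 : ∀ i, dist (X.2 i) (X₀.2 i) < δ ∧ dist (X.2 i) (X₀.2 i) ≤ 1 := by
      intro i
      have h0' : X₀.2 i ≤ X.2 i := hXl.2 i
      have hup : X.2 i ≤ X₀.2 i + e.2 i := hXr.2 i
      have hm1 : e.2 i ≤ δ/2 := min_le_left _ _
      have hm2 : e.2 i ≤ 1 - X₀.2 i := min_le_right _ _
      rw [Real.dist_eq, abs_of_nonneg (by linarith)]
      exact ⟨by linarith, by linarith [(h2 i).1]⟩
    have hdist : dist X X₀ < δ ∧ dist X X₀ ≤ 1 := by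
      rw [Prod.dist_eq]
      constructor
      · exact max_lt ((dist_pi_lt_iff hδ).mpr fun i => (hb1 i).1)
          ((dist_pi_lt_iff hδ).mpr fun i => (hb2 i).1)
      · exact max_le ((dist_pi_le_iff one_pos.le).mpr fun i => (hb1 i).2)
          ((dist_pi_le_iff one_pos.le).mpr fun i => (hb2 i).2)
    have hdY : dist (X + L) Y₀ < δ := by
      have hdd : dist (X + L) (X₀ + L) = dist X X₀ := by
        rw [dist_eq_norm, dist_eq_norm]
        congr 1
        abel
      rw [hY₀, hdd]
      exact hdist.1
    have hFY : ‖F Y₀‖ - ε < ‖F (X + L)‖ := by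
      have hd' := hball hdY
      rw [dist_eq_norm] at hd'
      have h2' : ‖F Y₀ - F (X + L)‖ < ε := by rwa [norm_sub_rev]
      linarith [norm_sub_norm_le (F Y₀) (F (X + L))]
    have hωY : ω Y₀ ≤ Cm * Cv * ω (X + L) := by
      have hsplit : Y₀ = (X + L) + (X₀ - X) := by rw [hY₀]; abel
      have hnorm : ‖X₀ - X‖ ≤ 2 := by
        rw [← dist_eq_norm]
        calc dist X₀ X = dist X X₀ := dist_comm _ _
          _ ≤ 1 := hdist.2
          _ ≤ 2 := one_le_two
      calc ω Y₀ = ω ((X + L) + (X₀ - X)) := by rw [← hsplit]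
        _ ≤ Cm * ω (X + L) * v (X₀ - X) := hmod _ _
        _ ≤ Cm * ω (X + L) * Cv :=
            mul_le_mul_of_nonneg_left (hvb _ hnorm) (mul_nonneg hCm.le (hωpos _).le)
        _ = Cm * Cv * ω (X + L) := by ring
    have hεval : ε * (2 * ω Y₀) = ‖F Y₀‖ * ω Y₀ - Cm * Cv * lam.toReal := by
      rw [hε]; field_simp
    have h1' : Cm * Cv * lam.toReal < (‖F Y₀‖ - ε) * ω Y₀ := by nlinarith [hεval, hkey]
    have h2' : 0 < ‖F Y₀‖ - ε := by
      nlinarith [h1', mul_nonneg (mul_nonneg hCm.le hCv.le) hltnn, hω₀pos]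
    have h3' : (‖F Y₀‖ - ε) * (ω Y₀ / (Cm * Cv)) ≤ (‖F Y₀‖ - ε) * ω (X + L) := by
      refine mul_le_mul_of_nonneg_left ?_ h2'.le
      rw [div_le_iff₀ hCmCv]
      linarith [hωY]
    have h4' : lam.toReal < (‖F Y₀‖ - ε) * (ω Y₀ / (Cm * Cv)) := by
      have hlt' : lam.toReal * (Cm * Cv) < (‖F Y₀‖ - ε) * ω Y₀ := by nlinarith [h1']
      calc lam.toReal = (lam.toReal * (Cm * Cv)) / (Cm * Cv) := by field_simp
        _ < ((‖F Y₀‖ - ε) * ω Y₀) / (Cm * Cv) := by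
            exact div_lt_div_of_pos_right hlt' hCmCv
        _ = (‖F Y₀‖ - ε) * (ω Y₀ / (Cm * Cv)) := by ring
    have h5' : (‖F Y₀‖ - ε) * ω (X + L) < ‖F (X + L)‖ * ω (X + L) :=
      mul_lt_mul_of_pos_right hFY (hωpos _)
    have hfinal : lam.toReal < ‖F (X + L)‖ * ω (X + L) :=
      lt_of_lt_of_le (lt_of_lt_of_le h4' h3') h5'.le
    rw [hwf (X + L), hlam]
    exact (ENNReal.ofReal_lt_ofReal_iff (lt_of_le_of_lt hltnn hfinal)).mpr hfinal
  have htop : (⊤:ℝ≥0∞) ≤ ∫⁻ X, extendPhi phiInf (wFun ω F (X + L) / lam)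
      ∂(volume.restrict (Qcube d)) := by
    have hmono : ∀ X, B.indicator (fun _ => (⊤:ℝ≥0∞)) X
        ≤ extendPhi phiInf (wFun ω F (X + L) / lam) := by
      intro X
      by_cases hX : X ∈ B
      · rw [Set.indicator_of_mem hX]
        exact le_of_eq (extendPhi_phiInf_eq_top hl0.ne' hlt (hlow X hX)).symm
      · rw [Set.indicator_of_notMem hX]
        exact zero_le
    calc (⊤:ℝ≥0∞) = ⊤ * (volume.restrict (Qcube d)) B := by
          rw [Measure.restrict_apply hBmeas, Set.inter_eq_self_of_subset_left hBsub]
          exact (ENNReal.top_mul hBvol).symm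
      _ = ∫⁻ _ in B, (⊤:ℝ≥0∞) ∂(volume.restrict (Qcube d)) := (setLIntegral_const _ _).symm
      _ = ∫⁻ X, B.indicator (fun _ => ⊤) X ∂(volume.restrict (Qcube d)) :=
          (lintegral_indicator hBmeas _).symm
      _ ≤ _ := lintegral_mono hmono
  have : (⊤:ℝ≥0∞) ≤ 1 := le_trans htop hint
  simp at this

end Aux2

private lemma statement12_main (d : ℕ) (r₀ : ℝ) (hr : r₀ ∈ Set.Ioc (0:ℝ) 1)
    (Φ₁ Φ₂ : ℝ≥0 → ℝ≥0∞) (hΦ₁ : IsQuasiYoung Φ₁ r₀) (hΦ₂ : IsQuasiYoung Φ₂ r₀)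
    (ω : PS d → ℝ) (hω : InPE ω) :
    ∃ Cω > 0, ∀ α β : ℝ, 0 < α → 0 < β → ∀ F : PS d → ℂ, Continuous F →
      wienerNorm d phiInf Φ₁ Φ₂ ω F ≠ ∞ →
      seqNorm d Φ₁ Φ₂ (fun kκ => ω (α • ivec kκ.1, β • ivec kκ.2))
          (fun kκ => F (α • ivec kκ.1, β • ivec kκ.2)) ≠ ∞ ∧
      seqNorm d Φ₁ Φ₂ (fun kκ => ω (α • ivec kκ.1, β • ivec kκ.2))
          (fun kκ => F (α • ivec kκ.1, β • ivec kκ.2)) ≤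
        ENNReal.ofReal (Cω *
            ((((Nat.floor (1/α) + 1 : ℕ) : ℝ) ^ d *
              ((Nat.floor (1/β) + 1 : ℕ) : ℝ) ^ d) ^ (1/r₀))) *
          wienerNorm d phiInf Φ₁ Φ₂ ω F := by
  classical
  obtain ⟨Φ₀₁, hq₁⟩ := hΦ₁
  obtain ⟨Φ₀₂, hq₂⟩ := hΦ₂
  have hr0 : 0 < r₀ := hr.1
  have hmono₁ : Monotone Φ₁ := fun s t hst => by
    rw [hq₁, hq₁]; exact young_mono Φ₀₁ (NNReal.rpow_le_rpow hst hr0.le)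
  have hmono₂ : Monotone Φ₂ := fun s t hst => by
    rw [hq₂, hq₂]; exact young_mono Φ₀₂ (NNReal.rpow_le_rpow hst hr0.le)
  obtain ⟨⟨hωpos, _⟩, v, ⟨⟨⟨hvpos, hvloc⟩, _, _⟩, Cm, hCm, hmod⟩⟩ := hω
  obtain ⟨Cv, hCv, hCvb⟩ := hvloc 2
  refine ⟨Cm * Cv, mul_pos hCm hCv, ?_⟩
  intro α β hα hβ F hFc hWfin
  have hc0 : ENNReal.ofReal (Cm * Cv) ≠ 0 := (ENNReal.ofReal_pos.mpr (mul_pos hCm hCv)).ne'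
  have hct : ENNReal.ofReal (Cm * Cv) ≠ ⊤ := ENNReal.ofReal_ne_top
  set Mα : ℕ := (Nat.floor (1/α) + 1) ^ d with hMαdef
  set Mβ : ℕ := (Nat.floor (1/β) + 1) ^ d with hMβdef
  have hMα0 : 0 < Mα := pow_pos (Nat.succ_pos _) d
  have hMβ0 : 0 < Mβ := pow_pos (Nat.succ_pos _) d
  have hMαp : ((Mα : ℝ≥0∞)) ^ (1/r₀ : ℝ) ≠ 0 :=
    (ENNReal.rpow_pos (by exact_mod_cast hMα0) (ENNReal.natCast_ne_top _)).ne'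
  have hMαt : ((Mα : ℝ≥0∞)) ^ (1/r₀ : ℝ) ≠ ⊤ :=
    ENNReal.rpow_ne_top_of_nonneg (by positivity) (ENNReal.natCast_ne_top _)
  have hMβp : ((Mβ : ℝ≥0∞)) ^ (1/r₀ : ℝ) ≠ 0 :=
    (ENNReal.rpow_pos (by exact_mod_cast hMβ0) (ENNReal.natCast_ne_top _)).ne'
  have hMβt : ((Mβ : ℝ≥0∞)) ^ (1/r₀ : ℝ) ≠ ⊤ :=
    ENNReal.rpow_ne_top_of_nonneg (by positivity) (ENNReal.natCast_ne_top _)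
  set f₁ : (Fin d → ℤ) → (Fin d → ℤ) := fun k => fun i => ⌊α * (k i : ℝ)⌋ with hf₁
  set f₂ : (Fin d → ℤ) → (Fin d → ℤ) := fun k => fun i => ⌊β * (k i : ℝ)⌋ with hf₂
  have hfib₁ : ∀ m, ∃ s : Finset (Fin d → ℤ), (∀ k, f₁ k = m → k ∈ s) ∧ s.card ≤ Mα :=
    fun m => fold_fiber d α hα m
  have hfib₂ : ∀ m, ∃ s : Finset (Fin d → ℤ), (∀ k, f₂ k = m → k ∈ s) ∧ s.card ≤ Mβ :=
    fun m => fold_fiber d β hβ m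
  set A : IdxD d → ℝ≥0∞ := fun m =>
    luxNorm (volume.restrict (Qcube d)) phiInf (fun X => wFun ω F (X + latPt 1 m)) with hA
  set g : (Fin d → ℤ) → ℝ≥0∞ := fun m2 =>
    luxNorm Measure.count Φ₁ (fun m1 => A (m1, m2)) with hg
  have hwiener : wienerNorm d phiInf Φ₁ Φ₂ ω F = luxNorm Measure.count Φ₂ g := rfl
  set W : IdxD d → ℝ := fun kκ => ω (α • ivec kκ.1, β • ivec kκ.2) with hW
  set cF : IdxD d → ℂ := fun kκ => F (α • ivec kκ.1, β • ivec kκ.2) with hcF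
  -- pointwise bound
  have hpt : ∀ kκ : IdxD d, wFun W cF kκ ≤ ENNReal.ofReal (Cm * Cv) * A (f₁ kκ.1, f₂ kκ.2) := by
    intro kκ
    set m : IdxD d := (f₁ kκ.1, f₂ kκ.2) with hm
    set X₀ : PS d := (α • ivec kκ.1, β • ivec kκ.2) - latPt 1 m with hX₀
    have hXadd : X₀ + latPt 1 m = (α • ivec kκ.1, β • ivec kκ.2) := sub_add_cancel _ _
    have key := sample_le d ω v hωpos Cm Cv hCm hCv hmod (fun x hx => (hCvb x hx).1)
      F hFc (latPt 1 m) X₀ ?_ ?_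
    · calc wFun W cF kκ = wFun ω F (X₀ + latPt 1 m) := by rw [hXadd]; rfl
        _ ≤ _ := key
    · intro i
      have hfr : X₀.1 i = Int.fract (α * (kκ.1 i : ℝ)) := by
        simp only [hX₀, hm, hf₁, latPt, ivec, Int.fract, Prod.fst_sub, Pi.sub_apply,
          Pi.smul_apply, smul_eq_mul, one_mul]
      rw [hfr]
      exact ⟨Int.fract_nonneg _, Int.fract_lt_one _⟩
    · intro i
      have hfr : X₀.2 i = Int.fract (β * (kκ.2 i : ℝ)) := by
        simp only [hX₀, hm, hf₂, latPt, ivec, Int.fract, Prod.snd_sub, Pi.sub_apply,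
          Pi.smul_apply, smul_eq_mul, one_mul]
      rw [hfr]
      exact ⟨Int.fract_nonneg _, Int.fract_lt_one _⟩
  -- inner bound
  have hin : ∀ κ, luxNorm Measure.count Φ₁ (fun k => wFun W cF (k, κ)) ≤
      (ENNReal.ofReal (Cm * Cv) * (Mα : ℝ≥0∞) ^ (1/r₀ : ℝ)) * g (f₂ κ) := by
    intro κ
    have s1 : luxNorm Measure.count Φ₁ (fun k => wFun W cF (k, κ)) ≤
        luxNorm Measure.count Φ₁ (fun k => ENNReal.ofReal (Cm * Cv) * A (f₁ k, f₂ κ)) :=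
      luxNorm_mono _ hmono₁ (fun k => hpt (k, κ))
    have s2 := luxNorm_smul_le Measure.count Φ₁ (ENNReal.ofReal (Cm * Cv)) hc0 hct
      (fun k => A (f₁ k, f₂ κ))
    have s3 := luxNorm_refold hr0 Φ₀₁ hq₁ f₁ Mα hMα0 hfib₁
      (fun k => A (f₁ k, f₂ κ)) (fun m1 => A (m1, f₂ κ)) (fun k => le_rfl)
    calc luxNorm Measure.count Φ₁ (fun k => wFun W cF (k, κ)) ≤ _ := s1
      _ ≤ ENNReal.ofReal (Cm * Cv) * luxNorm Measure.count Φ₁ (fun k => A (f₁ k, f₂ κ)) := s2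
      _ ≤ ENNReal.ofReal (Cm * Cv) *
          ((Mα : ℝ≥0∞) ^ (1/r₀ : ℝ) * luxNorm Measure.count Φ₁ (fun m1 => A (m1, f₂ κ))) :=
        mul_le_mul_right s3 _
      _ = (ENNReal.ofReal (Cm * Cv) * (Mα : ℝ≥0∞) ^ (1/r₀ : ℝ)) * g (f₂ κ) := by
        rw [hg, mul_assoc]
  -- outer bound
  have hseq : seqNorm d Φ₁ Φ₂ W cF ≤
      (ENNReal.ofReal (Cm * Cv) * (Mα : ℝ≥0∞) ^ (1/r₀ : ℝ)) *
        ((Mβ : ℝ≥0∞) ^ (1/r₀ : ℝ) * luxNorm Measure.count Φ₂ g) := by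
    have t1 : luxNorm Measure.count Φ₂
        (fun κ => luxNorm Measure.count Φ₁ (fun k => wFun W cF (k, κ))) ≤
        luxNorm Measure.count Φ₂
          (fun κ => (ENNReal.ofReal (Cm * Cv) * (Mα : ℝ≥0∞) ^ (1/r₀ : ℝ)) * g (f₂ κ)) :=
      luxNorm_mono _ hmono₂ hin
    have t2 := luxNorm_smul_le Measure.count Φ₂
      (ENNReal.ofReal (Cm * Cv) * (Mα : ℝ≥0∞) ^ (1/r₀ : ℝ))
      (mul_ne_zero hc0 hMαp) (ENNReal.mul_ne_top hct hMαt) (fun κ => g (f₂ κ))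
    have t3 := luxNorm_refold hr0 Φ₀₂ hq₂ f₂ Mβ hMβ0 hfib₂
      (fun κ => g (f₂ κ)) g (fun κ => le_rfl)
    exact le_trans t1 (le_trans t2 (mul_le_mul_right t3 _))
  -- constant
  have hconst : ENNReal.ofReal ((Cm * Cv) *
        ((((Nat.floor (1/α) + 1 : ℕ) : ℝ) ^ d *
          ((Nat.floor (1/β) + 1 : ℕ) : ℝ) ^ d) ^ (1/r₀))) =
      ENNReal.ofReal (Cm * Cv) * ((Mα : ℝ≥0∞) ^ (1/r₀ : ℝ) * (Mβ : ℝ≥0∞) ^ (1/r₀ : ℝ)) := by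
    have hab : (0:ℝ) < (((Nat.floor (1/α) + 1 : ℕ) : ℝ) ^ d *
        ((Nat.floor (1/β) + 1 : ℕ) : ℝ) ^ d) := by positivity
    rw [ENNReal.ofReal_mul (mul_pos hCm hCv).le]
    congr 1
    rw [← ENNReal.ofReal_rpow_of_pos hab, ENNReal.ofReal_mul (by positivity)]
    have e1 : ENNReal.ofReal (((Nat.floor (1/α) + 1 : ℕ) : ℝ) ^ d) = (Mα : ℝ≥0∞) := by
      rw [hMαdef]
      rw [show (((Nat.floor (1/α) + 1 : ℕ) : ℝ) ^ d) = (((Nat.floor (1/α) + 1) ^ d : ℕ) : ℝ)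
        by push_cast; ring]
      exact ENNReal.ofReal_natCast _
    have e2 : ENNReal.ofReal (((Nat.floor (1/β) + 1 : ℕ) : ℝ) ^ d) = (Mβ : ℝ≥0∞) := by
      rw [hMβdef]
      rw [show (((Nat.floor (1/β) + 1 : ℕ) : ℝ) ^ d) = (((Nat.floor (1/β) + 1) ^ d : ℕ) : ℝ)
        by push_cast; ring]
      exact ENNReal.ofReal_natCast _
    rw [e1, e2, ENNReal.mul_rpow_of_nonneg _ _ (by positivity)]
  have hmain : seqNorm d Φ₁ Φ₂ W cF ≤
      ENNReal.ofReal ((Cm * Cv) *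
        ((((Nat.floor (1/α) + 1 : ℕ) : ℝ) ^ d *
          ((Nat.floor (1/β) + 1 : ℕ) : ℝ) ^ d) ^ (1/r₀))) *
        wienerNorm d phiInf Φ₁ Φ₂ ω F := by
    rw [hconst, hwiener]
    calc seqNorm d Φ₁ Φ₂ W cF ≤ _ := hseq
      _ = ENNReal.ofReal (Cm * Cv) *
          ((Mα : ℝ≥0∞) ^ (1/r₀ : ℝ) * (Mβ : ℝ≥0∞) ^ (1/r₀ : ℝ)) *
            luxNorm Measure.count Φ₂ g := by ring
  refine ⟨?_, hmain⟩
  intro hcontra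
  have hlt : seqNorm d Φ₁ Φ₂ W cF < ⊤ :=
    lt_of_le_of_lt hmain (ENNReal.mul_lt_top ENNReal.ofReal_lt_top hWfin.lt_top)
  rw [hcontra] at hlt
  exact absurd hlt (lt_irrefl _)


/-- Sampling of a continuous `F ∈ W(L^{Φ₁,Φ₂}_{(ω)})`:
`‖c_F‖_{ℓ^{Φ₁,Φ₂}_{(ω)}} ≤ C_ω (C_α C_β)^{1/r₀} ‖F‖_{W(L^{Φ₁,Φ₂}_{(ω)})}` where
`c_F(k,κ) = F(αk,βκ)` and `C_α = (⌊1/α⌋+1)^d`, `C_β = (⌊1/β⌋+1)^d`. -/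
theorem statement12 (d : ℕ) (r₀ : ℝ) (hr : r₀ ∈ Set.Ioc (0:ℝ) 1)
    (Φ₁ Φ₂ : ℝ≥0 → ℝ≥0∞) (hΦ₁ : IsQuasiYoung Φ₁ r₀) (hΦ₂ : IsQuasiYoung Φ₂ r₀)
    (ω : PS d → ℝ) (hω : InPE ω) :
    ∃ Cω > 0, ∀ α β : ℝ, 0 < α → 0 < β → ∀ F : PS d → ℂ, Continuous F →
      wienerNorm d phiInf Φ₁ Φ₂ ω F ≠ ∞ →
      seqNorm d Φ₁ Φ₂ (fun kκ => ω (α • ivec kκ.1, β • ivec kκ.2))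
          (fun kκ => F (α • ivec kκ.1, β • ivec kκ.2)) ≠ ∞ ∧
      seqNorm d Φ₁ Φ₂ (fun kκ => ω (α • ivec kκ.1, β • ivec kκ.2))
          (fun kκ => F (α • ivec kκ.1, β • ivec kκ.2)) ≤
        ENNReal.ofReal (Cω *
            ((((Nat.floor (1/α) + 1 : ℕ) : ℝ) ^ d *
              ((Nat.floor (1/β) + 1 : ℕ) : ℝ) ^ d) ^ (1/r₀))) *
          wienerNorm d phiInf Φ₁ Φ₂ ω F := by
  exact statement12_main d r₀ hr Φ₁ Φ₂ hΦ₁ hΦ₂ ω hω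

end
end

section
/- Let Λ ⊆ ℝ^d be a lattice, ω₀ ∈ P_E(ℝ^d), B₁ ⊆ ℓ₀'(Λ) be a quasi-Banach space of sequences on Λ, and B₂ ⊆ ℓ₀'(Λ) be a quasi-Banach space of order r₀ ∈ (0,1] such that for every a ∈ B₁ and n ∈ Λ the translate k ↦ a(k−n) belongs to B₂ with ‖a(·−n)‖_{B₂} ≤ C ω₀(n) ‖a‖_{B₁} for some constant C > 0. Then the discrete convolution (a,b) ↦ a∗b, where (a∗b)(n) = Σ_{k∈Λ} a(k)b(n−k), defined from finitely supported sequences times B₁, extends uniquely to a continuous map from ℓ^{r₀}_{(ω₀)}(Λ) × B₁ to B₂, and ‖a∗b‖_{B₂} ≤ C ‖a‖_{ℓ^{r₀}_{(ω₀)}} ‖b‖_{B₁} for all a ∈ ℓ^{r₀}_{(ω₀)}(Λ) and b ∈ B₁. -/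
open MeasureTheory Filter
open scoped ENNReal NNReal BigOperators ComplexConjugate

noncomputable section

/-- Discrete convolution into an abstract quasi-Banach sequence
space: if translations map `B₁` into `B₂` with bound `C ω₀(n)`, then
`(a,b) ↦ a∗b` extends uniquely to a continuous map `ℓ^{r₀}_{(ω₀)}(Λ) × B₁ → B₂`
with `‖a∗b‖_{B₂} ≤ C ‖a‖ ‖b‖_{B₁}`. -/
theorem statement14 (d : ℕ) (r₀ r₁ : ℝ)
    (hr₀ : r₀ ∈ Set.Ioc (0:ℝ) 1) (hr₁ : r₁ ∈ Set.Ioc (0:ℝ) 1)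
    (T : RD d →ₗ[ℝ] RD d) (hT : Function.Bijective T)
    (ω₀ : RD d → ℝ) (hω₀ : InPE ω₀)
    (B₁ : QBSpace ((Fin d → ℤ) → ℂ) r₁) (B₂ : QBSpace ((Fin d → ℤ) → ℂ) r₀)
    (C : ℝ) (hC : 0 < C)
    (htrans : ∀ (a : (Fin d → ℤ) → ℂ) (n : Fin d → ℤ), B₁.Mem a →
      B₂.Mem (fun k => a (k - n)) ∧
      B₂.N (fun k => a (k - n)) ≤ ENNReal.ofReal (C * ω₀ (T (ivec n))) * B₁.N a) :
    ∃ Conv : ((Fin d → ℤ) → ℂ) → ((Fin d → ℤ) → ℂ) → ((Fin d → ℤ) → ℂ),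
      (∀ (s : Finset (Fin d → ℤ)) (a b : (Fin d → ℤ) → ℂ),
        (∀ k ∉ s, a k = 0) →
        Conv a b = fun n => ∑ k ∈ s, a k * b (n - k)) ∧
      (∀ (a b : (Fin d → ℤ) → ℂ), B₁.Mem b →
        ellRNorm r₀ (fun k => ω₀ (T (ivec k))) a ≠ ∞ →
        B₂.Mem (Conv a b) ∧
        B₂.N (Conv a b) ≤
          ENNReal.ofReal C * ellRNorm r₀ (fun k => ω₀ (T (ivec k))) a * B₁.N b) ∧
      (∀ (a b : (Fin d → ℤ) → ℂ), B₁.Mem b →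
        ellRNorm r₀ (fun k => ω₀ (T (ivec k))) a ≠ ∞ →
        Tendsto (fun s : Finset (Fin d → ℤ) =>
            B₂.N (Conv a b - Conv (fun k => if k ∈ s then a k else 0) b))
          atTop (nhds 0)) ∧
      ∀ Conv' : ((Fin d → ℤ) → ℂ) → ((Fin d → ℤ) → ℂ) → ((Fin d → ℤ) → ℂ),
        ((∀ (s : Finset (Fin d → ℤ)) (a b : (Fin d → ℤ) → ℂ),
            (∀ k ∉ s, a k = 0) →
            Conv' a b = fun n => ∑ k ∈ s, a k * b (n - k)) ∧
          (∀ (a b : (Fin d → ℤ) → ℂ), B₁.Mem b →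
            ellRNorm r₀ (fun k => ω₀ (T (ivec k))) a ≠ ∞ →
            B₂.Mem (Conv' a b) ∧
            Tendsto (fun s : Finset (Fin d → ℤ) =>
                B₂.N (Conv' a b - Conv' (fun k => if k ∈ s then a k else 0) b))
              atTop (nhds 0))) →
        ∀ (a b : (Fin d → ℤ) → ℂ), B₁.Mem b →
          ellRNorm r₀ (fun k => ω₀ (T (ivec k))) a ≠ ∞ →
          B₂.N (Conv' a b - Conv a b) = 0 := by
  classical
  obtain ⟨hr₀pos, hr₀le⟩ := hr₀
  set W : (Fin d → ℤ) → ℝ := fun k => ω₀ (T (ivec k)) with hW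
  set g : ((Fin d → ℤ) → ℂ) → (Fin d → ℤ) → ℝ≥0∞ :=
    fun a k => ((‖a k‖₊ : ℝ≥0∞) * ENNReal.ofReal (W k)) ^ r₀ with hg
  set P : ((Fin d → ℤ) → ℂ) → ((Fin d → ℤ) → ℂ) → Finset (Fin d → ℤ) → ((Fin d → ℤ) → ℂ) :=
    fun a b s => fun n => ∑ k ∈ s, a k * b (n - k) with hP
  set K : ((Fin d → ℤ) → ℂ) → ℝ≥0∞ := fun b => (ENNReal.ofReal C * B₁.N b) ^ r₀ with hK
  set tail : ((Fin d → ℤ) → ℂ) → Finset (Fin d → ℤ) → ℝ≥0∞ :=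
    fun a s => ∑' k : {k : Fin d → ℤ // k ∉ s}, g a k with htail
  -- basic relations for the weighted ℓ^r₀ norm
  have hell : ∀ a, ellRNorm r₀ W a = (∑' k, g a k) ^ (1 / r₀) := fun a => rfl
  have hsum_ne : ∀ a : (Fin d → ℤ) → ℂ, ellRNorm r₀ W a ≠ ∞ → (∑' k, g a k) ≠ ∞ := by
    intro a h hcon
    apply h
    rw [hell, hcon, ENNReal.top_rpow_of_pos (by positivity)]
  have hpow : ∀ a, ellRNorm r₀ W a ^ r₀ = ∑' k, g a k := by
    intro a
    rw [hell, ← ENNReal.rpow_mul, one_div, inv_mul_cancel₀ hr₀pos.ne', ENNReal.rpow_one]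
  -- basic facts about B₂
  have hNneg : ∀ f, B₂.N (-f) = B₂.N f := by
    intro f
    have h := B₂.norm_smul (-1) f
    rw [neg_one_smul] at h
    rw [h]; simp
  have hMemNeg : ∀ f, B₂.Mem f → B₂.Mem (-f) := by
    intro f hf
    have := B₂.mem_smul (-1) f hf
    rwa [neg_one_smul] at this
  have hMemSub : ∀ f g', B₂.Mem f → B₂.Mem g' → B₂.Mem (f - g') := by
    intro f g' hf hg'
    rw [sub_eq_add_neg]
    exact B₂.mem_add _ _ hf (hMemNeg _ hg')
  have hNsub_comm : ∀ f g', B₂.N (f - g') = B₂.N (g' - f) := by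
    intro f g'
    rw [← neg_sub, hNneg]
  have htri : ∀ f g', B₂.Mem f → B₂.Mem g' →
      B₂.N (f - g') ^ r₀ ≤ B₂.N f ^ r₀ + B₂.N g' ^ r₀ := by
    intro f g' hf hg'
    have h := B₂.triangle f (-g') hf (hMemNeg _ hg')
    rw [← sub_eq_add_neg, hNneg] at h
    exact h
  -- the fundamental finite-sum estimate
  have hA : ∀ (a b : (Fin d → ℤ) → ℂ), B₁.Mem b → ∀ s : Finset (Fin d → ℤ),
      B₂.Mem (P a b s) ∧ B₂.N (P a b s) ^ r₀ ≤ K b * ∑ k ∈ s, g a k := by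
    intro a b hb s
    induction s using Finset.induction with
    | empty =>
      have h0 : P a b ∅ = (0 : (Fin d → ℤ) → ℂ) := funext fun n => by simp [hP]
      have hm := (htrans b 0 hb).1
      have hmem0 : B₂.Mem (0 : (Fin d → ℤ) → ℂ) := by
        have := B₂.mem_smul 0 _ hm
        rwa [zero_smul] at this
      have hN0 : B₂.N (0 : (Fin d → ℤ) → ℂ) = 0 := by
        have := B₂.norm_smul 0 (fun k => b (k - 0))
        rw [zero_smul] at this
        simpa using this
      rw [h0]
      exact ⟨hmem0, by rw [hN0, ENNReal.zero_rpow_of_pos hr₀pos]; simp⟩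
    | insert j s hj ih =>
      have hsplit : P a b (insert j s) = (a j • fun n => b (n - j)) + P a b s := by
        funext n
        simp [hP, Finset.sum_insert hj]
      have hmemt := (htrans b j hb).1
      have hmemj : B₂.Mem (a j • fun n => b (n - j)) := B₂.mem_smul _ _ hmemt
      have hNj : B₂.N (a j • fun n => b (n - j)) ≤
          (‖a j‖₊ : ℝ≥0∞) * (ENNReal.ofReal (C * W j) * B₁.N b) := by
        rw [B₂.norm_smul]
        exact mul_le_mul_right (htrans b j hb).2 _
      constructor
      · rw [hsplit]; exact B₂.mem_add _ _ hmemj ih.1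
      · rw [hsplit]
        refine le_trans (B₂.triangle _ _ hmemj ih.1) ?_
        rw [Finset.sum_insert hj, mul_add]
        refine add_le_add ?_ ih.2
        calc B₂.N (a j • fun n => b (n - j)) ^ r₀
            ≤ ((‖a j‖₊ : ℝ≥0∞) * (ENNReal.ofReal (C * W j) * B₁.N b)) ^ r₀ :=
              ENNReal.rpow_le_rpow hNj hr₀pos.le
          _ = K b * g a j := by
              rw [ENNReal.ofReal_mul hC.le,
                show (‖a j‖₊ : ℝ≥0∞) * (ENNReal.ofReal C * ENNReal.ofReal (W j) * B₁.N b)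
                  = (ENNReal.ofReal C * B₁.N b) * ((‖a j‖₊ : ℝ≥0∞) * ENNReal.ofReal (W j)) by
                  ring,
                ENNReal.mul_rpow_of_nonneg _ _ hr₀pos.le]
  -- tails
  have htail_eq : ∀ a s, tail a s = ∑' k, Set.indicator {k | k ∉ s} (g a) k := by
    intro a s
    rw [htail]
    exact tsum_subtype _ _
  have htail_le : ∀ (a : (Fin d → ℤ) → ℂ) (s u : Finset (Fin d → ℤ)),
      (∀ k ∈ u, k ∉ s) → ∑ k ∈ u, g a k ≤ tail a s := by
    intro a s u hu
    have h1 : ∑ k ∈ u, g a k = ∑ k ∈ u, Set.indicator {k | k ∉ s} (g a) k :=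
      Finset.sum_congr rfl fun k hk =>
        (Set.indicator_of_mem (show k ∈ {k : Fin d → ℤ | k ∉ s} from hu k hk) (g a)).symm
    rw [h1, htail_eq]
    exact ENNReal.sum_le_tsum u
  have htail_mono : ∀ (a : (Fin d → ℤ) → ℂ) (s t : Finset (Fin d → ℤ)),
      s ⊆ t → tail a t ≤ tail a s := by
    intro a s t hst
    rw [htail_eq, htail_eq]
    refine ENNReal.tsum_le_tsum fun k =>
      Set.indicator_le_indicator_of_subset
        (show {k : Fin d → ℤ | k ∉ t} ⊆ {k : Fin d → ℤ | k ∉ s} from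
          fun x hx hxs => hx (hst hxs))
        (fun _ => zero_le) k
  -- differences of partial sums
  have hPdiff : ∀ (a b : (Fin d → ℤ) → ℂ) (s t : Finset (Fin d → ℤ)), s ⊆ t →
      P a b t - P a b s = P a b (t \ s) := by
    intro a b s t hst
    funext n
    simp only [hP, Pi.sub_apply]
    rw [sub_eq_iff_eq_add]
    exact (Finset.sum_sdiff hst).symm
  have hPgen : ∀ (a b : (Fin d → ℤ) → ℂ) (s t : Finset (Fin d → ℤ)),
      P a b t - P a b s = P a b (t \ s) - P a b (s \ t) := by
    intro a b s t
    funext n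
    simp only [hP, Pi.sub_apply]
    have h1 := Finset.sum_sdiff (f := fun k => a k * b (n - k))
      (Finset.inter_subset_left (s₁ := t) (s₂ := s))
    rw [Finset.sdiff_inter_self_left] at h1
    have h2 := Finset.sum_sdiff (f := fun k => a k * b (n - k))
      (Finset.inter_subset_left (s₁ := s) (s₂ := t))
    rw [Finset.sdiff_inter_self_left] at h2
    rw [← h1, ← h2, Finset.inter_comm]
    ring
  have hdiffbound : ∀ (a b : (Fin d → ℤ) → ℂ), B₁.Mem b →
      ∀ (s t : Finset (Fin d → ℤ)),
      B₂.N (P a b t - P a b s) ^ r₀ ≤ K b * tail a s + K b * tail a t := by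
    intro a b hb s t
    rw [hPgen a b s t]
    refine le_trans (htri _ _ (hA a b hb _).1 (hA a b hb _).1) (add_le_add ?_ ?_)
    · exact le_trans (hA a b hb _).2
        (mul_le_mul_right (htail_le a s _ fun k hk => (Finset.mem_sdiff.1 hk).2) _)
    · exact le_trans (hA a b hb _).2
        (mul_le_mul_right (htail_le a t _ fun k hk => (Finset.mem_sdiff.1 hk).2) _)
  -- constants
  have hKne : ∀ b, B₁.Mem b → K b ≠ ∞ := by
    intro b hb
    rw [hK]
    simp only [Ne, ENNReal.rpow_eq_top_iff_of_pos hr₀pos]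
    exact ENNReal.mul_ne_top ENNReal.ofReal_ne_top (B₁.finite b hb).ne
  have hKtail : ∀ (a b : (Fin d → ℤ) → ℂ), B₁.Mem b → (∑' k, g a k) ≠ ∞ →
      Tendsto (fun s : Finset (Fin d → ℤ) => K b * tail a s) atTop (nhds 0) := by
    intro a b hb hsum
    have h1 : Tendsto (fun s : Finset (Fin d → ℤ) => tail a s) atTop (nhds 0) :=
      ENNReal.tendsto_tsum_compl_atTop_zero hsum
    simpa using ENNReal.Tendsto.const_mul h1 (Or.inr (hKne b hb))
  -- exhausting sequence of finsets
  letI : Encodable (Fin d → ℤ) := Encodable.ofCountable _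
  set e : ℕ → Finset (Fin d → ℤ) := fun j =>
    (Finset.range j).image (fun i => (Encodable.decode (α := Fin d → ℤ) i).getD (fun _ => 0))
    with he
  have hemono : Monotone e := fun i j hij =>
    Finset.image_subset_image (Finset.range_subset_range.2 hij)
  have heatTop : Tendsto e atTop atTop := by
    refine tendsto_atTop_finset_of_monotone hemono fun k => ?_
    exact ⟨Encodable.encode k + 1, Finset.mem_image.2
      ⟨Encodable.encode k, Finset.mem_range.2 (Nat.lt_succ_self _), by simp⟩⟩
  -- the key existence result: a limit of the partial sums with explicit tail bounds
  have hKey : ∀ (a b : (Fin d → ℤ) → ℂ), B₁.Mem b → (∑' k, g a k) ≠ ∞ →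
      ∃ v, B₂.Mem v ∧ ∀ s : Finset (Fin d → ℤ),
        B₂.N (v - P a b s) ^ r₀ ≤ K b * tail a s := by
    intro a b hb hsum
    set u : ℕ → ((Fin d → ℤ) → ℂ) := fun j => P a b (e j) with hu_def
    have hu : ∀ j, B₂.Mem (u j) := fun j => (hA a b hb (e j)).1
    have hcauchy : ∀ δ : ℝ≥0∞, 0 < δ → ∃ M : ℕ, ∀ m n, M ≤ m → M ≤ n →
        B₂.N (u m - u n) < δ := by
      intro δ hδ
      have hδr : 0 < δ ^ r₀ := by
        rcases eq_or_ne δ ∞ with hδt | hδt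
        · rw [hδt, ENNReal.top_rpow_of_pos hr₀pos]; exact ENNReal.zero_lt_top
        · exact ENNReal.rpow_pos hδ hδt
      have h2 : Tendsto (fun j : ℕ => K b * tail a (e j) + K b * tail a (e j))
          atTop (nhds 0) := by
        have := ((hKtail a b hb hsum).comp heatTop)
        simpa using this.add this
      obtain ⟨M, hM⟩ := (h2.eventually (Iio_mem_nhds hδr)).exists
      refine ⟨M, fun m n hm hn => ?_⟩
      have hb1 : B₂.N (u m - u n) ^ r₀ ≤ K b * tail a (e M) + K b * tail a (e M) :=
        le_trans (hdiffbound a b hb (e n) (e m))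
          (add_le_add (mul_le_mul_right (htail_mono a _ _ (hemono hn)) _)
            (mul_le_mul_right (htail_mono a _ _ (hemono hm)) _))
      exact (ENNReal.rpow_lt_rpow_iff hr₀pos).1 (lt_of_le_of_lt hb1 hM)
    obtain ⟨v, hv, hvt⟩ := B₂.complete u hu hcauchy
    refine ⟨v, hv, fun s => ?_⟩
    have hj : ∀ j : ℕ, B₂.N (v - P a b s) ^ r₀ ≤
        B₂.N (u j - v) ^ r₀ + (K b * tail a s + K b * tail a (e j)) := by
      intro j
      have h1 : v - P a b s = (v - u j) + (u j - P a b s) := by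
        rw [sub_add_sub_cancel]
      rw [h1]
      refine le_trans (B₂.triangle _ _ (hMemSub _ _ hv (hu j))
        (hMemSub _ _ (hu j) (hA a b hb s).1)) ?_
      refine add_le_add ?_ (hdiffbound a b hb s (e j))
      rw [hNsub_comm]
    have hlim : Tendsto (fun j : ℕ => B₂.N (u j - v) ^ r₀ +
        (K b * tail a s + K b * tail a (e j))) atTop
        (nhds (0 + (K b * tail a s + 0))) := by
      refine Filter.Tendsto.add ?_ (tendsto_const_nhds.add ((hKtail a b hb hsum).comp heatTop))
      have := ((ENNReal.continuous_rpow_const (y := r₀)).tendsto 0).comp hvt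
      simpa [Function.comp_def, ENNReal.zero_rpow_of_pos hr₀pos] using this
    have := ge_of_tendsto hlim (Filter.Eventually.of_forall hj)
    simpa using this
  -- definition of the convolution map
  obtain ⟨F, hFdef⟩ : ∃ F : ((Fin d → ℤ) → ℂ) → ((Fin d → ℤ) → ℂ) → ((Fin d → ℤ) → ℂ),
      ∀ a b, F a b = if hfin : (Function.support a).Finite then
          (fun n => ∑' k, a k * b (n - k))
        else if h : B₁.Mem b ∧ ellRNorm r₀ W a ≠ ∞ then
          Classical.choose (hKey a b h.1 (hsum_ne a h.2)) else 0 :=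
    ⟨_, fun a b => rfl⟩
  -- the key spec of F
  have hConvSpec : ∀ (a b : (Fin d → ℤ) → ℂ), B₁.Mem b → ellRNorm r₀ W a ≠ ∞ →
      B₂.Mem (F a b) ∧ ∀ s : Finset (Fin d → ℤ),
        B₂.N (F a b - P a b s) ^ r₀ ≤ K b * tail a s := by
    intro a b hb ha
    by_cases hfin : (Function.support a).Finite
    · rw [hFdef, dif_pos hfin]
      have hrepr : (fun n => ∑' k, a k * b (n - k)) = P a b hfin.toFinset := by
        funext n
        refine tsum_eq_sum fun k hk => ?_
        have hk0 : a k = 0 := by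
          by_contra h0
          exact hk (hfin.mem_toFinset.2 h0)
        rw [hk0, zero_mul]
      rw [hrepr]
      refine ⟨(hA a b hb _).1, fun s => ?_⟩
      have h2 : P a b hfin.toFinset = P a b (hfin.toFinset ∪ s) := by
        funext n
        refine Finset.sum_subset Finset.subset_union_left fun k hk hk2 => ?_
        have hk0 : a k = 0 := by
          by_contra h0
          exact hk2 (hfin.mem_toFinset.2 h0)
        rw [hk0, zero_mul]
      rw [h2, hPdiff a b s _ Finset.subset_union_right]
      exact le_trans (hA a b hb _).2
        (mul_le_mul_right (htail_le a s _ fun k hk => (Finset.mem_sdiff.1 hk).2) _)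
    · rw [hFdef, dif_neg hfin, dif_pos (⟨hb, ha⟩ : B₁.Mem b ∧ ellRNorm r₀ W a ≠ ∞)]
      exact ⟨(Classical.choose_spec (hKey a b hb (hsum_ne a ha))).1,
        (Classical.choose_spec (hKey a b hb (hsum_ne a ha))).2⟩
  -- agreement on restricted sequences
  have hres : ∀ (a b : (Fin d → ℤ) → ℂ) (s : Finset (Fin d → ℤ)),
      F (fun k => if k ∈ s then a k else 0) b = P a b s := by
    intro a b s
    have hfin : (Function.support fun k => if k ∈ s then a k else 0).Finite := by
      refine Set.Finite.subset s.finite_toSet fun k hk => ?_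
      simp only [Function.mem_support] at hk
      by_contra hks
      exact hk (if_neg hks)
    rw [hFdef, dif_pos hfin]
    funext n
    rw [tsum_eq_sum (s := s) fun k hk => by rw [if_neg hk, zero_mul]]
    exact Finset.sum_congr rfl fun k hk => by rw [if_pos hk]
  refine ⟨F, ?_, ?_, ?_, ?_⟩
  · -- finitely supported case
    intro s a b hvan
    have hfin : (Function.support a).Finite := by
      refine Set.Finite.subset s.finite_toSet fun k hk => ?_
      simp only [Function.mem_support] at hk
      by_contra hks
      exact hk (hvan k hks)
    rw [hFdef, dif_pos hfin]
    funext n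
    exact tsum_eq_sum fun k hk => by rw [hvan k hk, zero_mul]
  · -- membership and norm bound
    intro a b hb ha
    obtain ⟨hm, hs⟩ := hConvSpec a b hb ha
    refine ⟨hm, ?_⟩
    have h := hs ∅
    have hP0 : P a b ∅ = (0 : (Fin d → ℤ) → ℂ) := funext fun n => by simp [hP]
    rw [hP0, sub_zero] at h
    have htail0 : tail a ∅ = ∑' k, g a k := by
      rw [htail_eq]
      have huniv : {k : Fin d → ℤ | k ∉ (∅ : Finset (Fin d → ℤ))} = Set.univ := by
        ext k; simp
      rw [huniv, Set.indicator_univ]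
    rw [htail0, ← hpow a] at h
    rw [← ENNReal.rpow_le_rpow_iff hr₀pos]
    refine le_trans h (le_of_eq ?_)
    calc K b * ellRNorm r₀ W a ^ r₀
        = ((ENNReal.ofReal C * B₁.N b) * ellRNorm r₀ W a) ^ r₀ :=
          (ENNReal.mul_rpow_of_nonneg (ENNReal.ofReal C * B₁.N b)
            (ellRNorm r₀ W a) hr₀pos.le).symm
      _ = (ENNReal.ofReal C * ellRNorm r₀ W a * B₁.N b) ^ r₀ := by
          congr 1
          ring
  · -- convergence of the partial sums
    intro a b hb ha
    have hs := (hConvSpec a b hb ha).2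
    have hb1 : ∀ s : Finset (Fin d → ℤ),
        B₂.N (F a b - F (fun k => if k ∈ s then a k else 0) b) ≤
          (K b * tail a s) ^ (1 / r₀) := by
      intro s
      rw [hres a b s]
      have h1 : B₂.N (F a b - P a b s) =
          (B₂.N (F a b - P a b s) ^ r₀) ^ (1 / r₀) := by
        rw [← ENNReal.rpow_mul, mul_one_div, div_self hr₀pos.ne', ENNReal.rpow_one]
      rw [h1]
      exact ENNReal.rpow_le_rpow (hs s) (by positivity)
    have hupper : Tendsto (fun s : Finset (Fin d → ℤ) => (K b * tail a s) ^ (1 / r₀))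
        atTop (nhds 0) := by
      have := ((ENNReal.continuous_rpow_const (y := 1 / r₀)).tendsto 0).comp
        (hKtail a b hb (hsum_ne a ha))
      simpa [Function.comp_def, one_div,
        ENNReal.zero_rpow_of_pos (show (0:ℝ) < r₀⁻¹ by positivity)] using this
    exact tendsto_of_tendsto_of_tendsto_of_le_of_le tendsto_const_nhds hupper
      (fun s => zero_le) hb1
  · -- uniqueness
    rintro Conv' ⟨h1', h2'⟩ a b hb ha
    obtain ⟨hm', ht'⟩ := h2' a b hb ha
    have hmF := (hConvSpec a b hb ha).1
    have hres' : ∀ s : Finset (Fin d → ℤ),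
        Conv' (fun k => if k ∈ s then a k else 0) b = P a b s := by
      intro s
      rw [h1' s _ b fun k hk => if_neg hk]
      funext n
      exact Finset.sum_congr rfl fun k hk => by rw [if_pos hk]
    have hbound : ∀ s : Finset (Fin d → ℤ),
        B₂.N (Conv' a b - F a b) ^ r₀ ≤
          B₂.N (Conv' a b - Conv' (fun k => if k ∈ s then a k else 0) b) ^ r₀ +
            K b * tail a s := by
      intro s
      have hsplit : Conv' a b - F a b = (Conv' a b - P a b s) + (P a b s - F a b) :=
        (sub_add_sub_cancel _ _ _).symm
      rw [hsplit]
      refine le_trans (B₂.triangle _ _ (hMemSub _ _ hm' (hA a b hb s).1)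
        (hMemSub _ _ (hA a b hb s).1 hmF)) (add_le_add ?_ ?_)
      · rw [hres' s]
      · rw [hNsub_comm]
        exact (hConvSpec a b hb ha).2 s
    have hlim : Tendsto (fun s : Finset (Fin d → ℤ) =>
        B₂.N (Conv' a b - Conv' (fun k => if k ∈ s then a k else 0) b) ^ r₀ +
          K b * tail a s) atTop (nhds 0) := by
      have h1 := ((ENNReal.continuous_rpow_const (y := r₀)).tendsto 0).comp ht'
      have h2 := hKtail a b hb (hsum_ne a ha)
      simpa [ENNReal.zero_rpow_of_pos hr₀pos] using h1.add h2
    have hle : B₂.N (Conv' a b - F a b) ^ r₀ ≤ 0 :=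
      ge_of_tendsto hlim (Filter.Eventually.of_forall hbound)
    have h0 : B₂.N (Conv' a b - F a b) ^ r₀ = 0 := le_antisymm hle zero_le
    rcases ENNReal.rpow_eq_zero_iff.1 h0 with ⟨h, _⟩ | ⟨_, hneg⟩
    · exact h
    · exact absurd hneg (not_lt.2 hr₀pos.le)

end
end

section
/- Let Λ ⊆ ℝ^d be a lattice and Φ, Φ₁, Φ₂ be quasi-Young functions of order r₀ ∈ (0,1]. Then: (1) if ω_j ∈ P_E(ℝ^d), j = 0,1,2, satisfy ω₀(x+y) ≲ ω₁(x)ω₂(y), then discrete convolution extends uniquely to a continuous map from ℓ^{r₀}_{(ω₁)}(Λ) × ℓ^Φ_{(ω₂)}(Λ) to ℓ^Φ_{(ω₀)}(Λ); and (2) if ω_j ∈ P_E(ℝ^{2d}), j = 0,1,2, satisfy ω₀(X+Y) ≲ ω₁(X)ω₂(Y), then discrete convolution on Λ² = Λ×Λ extends uniquely to a continuous map from ℓ^{r₀}_{(ω₁)}(Λ²) × ℓ^{Φ₁,Φ₂}_{(ω₂)}(Λ²) to ℓ^{Φ₁,Φ₂}_{(ω₀)}(Λ²). -/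
open MeasureTheory Filter
open scoped ENNReal NNReal BigOperators ComplexConjugate

noncomputable section

namespace S15Aux

/-! ### Basic properties of Young functions -/

lemma young_mono (Φ₀ : YoungFunction) : Monotone Φ₀.toFun := by
  intro a b hab
  rcases eq_or_ne b 0 with rfl | hb
  · rw [le_zero_iff.mp hab]
  · have hs : a / b ≤ 1 := (div_le_iff₀ (pos_iff_ne_zero.mpr hb)).mpr (by simpa using hab)
    have h := Φ₀.convex' (a / b) b 0 hs
    have harg : a / b * b + (1 - a / b) * 0 = a := by
      rw [mul_zero, add_zero, div_mul_cancel₀ _ hb]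
    rw [harg, Φ₀.map_zero', mul_zero, add_zero] at h
    exact h.trans (mul_le_of_le_one_left (zero_le) (by exact_mod_cast hs))

lemma young_exists_one (Φ₀ : YoungFunction) : ∃ t₁ : ℝ≥0, 0 < t₁ ∧ 1 ≤ Φ₀.toFun t₁ := by
  obtain ⟨N, hN⟩ := (Filter.eventually_atTop).mp (Φ₀.tendsto_top'.eventually_ge_atTop 1)
  exact ⟨max N 1, lt_of_lt_of_le one_pos (le_max_right _ _), hN _ (le_max_left _ _)⟩

lemma psi_coe (Φ₀ : YoungFunction) (s : ℝ≥0) :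
    extendPhi Φ₀.toFun (s : ℝ≥0∞) = Φ₀.toFun s := by
  simp [extendPhi]

lemma psi_ne_top (Φ₀ : YoungFunction) {x : ℝ≥0∞} (hx : x ≠ ∞) :
    extendPhi Φ₀.toFun x = Φ₀.toFun x.toNNReal := by
  simp [extendPhi, hx]

lemma psi_zero (Φ₀ : YoungFunction) : extendPhi Φ₀.toFun 0 = 0 := by
  simp [extendPhi, Φ₀.map_zero']

lemma psi_mono (Φ₀ : YoungFunction) : Monotone (extendPhi Φ₀.toFun) := by
  intro x y hxy
  rcases eq_or_ne y ∞ with rfl | hy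
  · simp [extendPhi]
  · have hx : x ≠ ∞ := fun h => hy (top_le_iff.mp (h ▸ hxy))
    rw [psi_ne_top Φ₀ hx, psi_ne_top Φ₀ hy]
    exact young_mono Φ₀ (ENNReal.toNNReal_mono hy hxy)

lemma psi_growth (Φ₀ : YoungFunction) :
    ∃ t₁ : ℝ≥0, 0 < t₁ ∧ ∀ x : ℝ≥0∞, x ≤ (t₁ : ℝ≥0∞) * extendPhi Φ₀.toFun x + t₁ := by
  obtain ⟨t₁, ht₁, h1⟩ := young_exists_one Φ₀
  refine ⟨t₁, ht₁, fun x => ?_⟩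
  rcases le_or_gt x t₁ with h | h
  · exact h.trans le_add_self
  rcases eq_or_ne x ∞ with rfl | hx
  · have : (t₁ : ℝ≥0∞) * extendPhi Φ₀.toFun ∞ = ∞ := by
      have : extendPhi Φ₀.toFun ∞ = ∞ := by simp [extendPhi]
      rw [this, ENNReal.mul_top (by exact_mod_cast ht₁.ne')]
    simp [this]
  · have hx0 : x.toNNReal ≠ 0 := by
      have hxpos : (0 : ℝ≥0∞) < x := lt_of_le_of_lt (zero_le) h
      simp [ENNReal.toNNReal_eq_zero_iff, hx, hxpos.ne']
    have hle : (t₁ : ℝ≥0∞) ≤ (x.toNNReal : ℝ≥0∞) := by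
      rw [ENNReal.coe_toNNReal hx]; exact h.le
    have hs : t₁ / x.toNNReal ≤ 1 := by
      apply (div_le_iff₀ (pos_iff_ne_zero.mpr hx0)).mpr
      rw [one_mul]; exact_mod_cast hle
    have hconv := Φ₀.convex' (t₁ / x.toNNReal) x.toNNReal 0 hs
    have harg : t₁ / x.toNNReal * x.toNNReal + (1 - t₁ / x.toNNReal) * 0 = t₁ := by
      rw [mul_zero, add_zero, div_mul_cancel₀ _ hx0]
    rw [harg, Φ₀.map_zero', mul_zero, add_zero] at hconv
    have h2 : 1 ≤ ((t₁ / x.toNNReal : ℝ≥0) : ℝ≥0∞) * extendPhi Φ₀.toFun x := by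
      rw [psi_ne_top Φ₀ hx]
      exact h1.trans hconv
    have h3 : x * 1 ≤ x * (((t₁ / x.toNNReal : ℝ≥0) : ℝ≥0∞) * extendPhi Φ₀.toFun x) :=
      mul_le_mul_right h2 x
    rw [mul_one] at h3
    have h4 : x * ((t₁ / x.toNNReal : ℝ≥0) : ℝ≥0∞) = (t₁ : ℝ≥0∞) := by
      rw [← ENNReal.coe_toNNReal hx, ← ENNReal.coe_mul]
      congr 1
      rw [mul_comm]
      exact div_mul_cancel₀ _ hx0
    rw [← mul_assoc, h4] at h3
    exact h3.trans le_self_add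

/-! ### Jensen inequalities -/

lemma young_jensen_finset (Φ₀ : YoungFunction) {ι : Type*} (F : Finset ι)
    (lam x : ι → ℝ≥0) (h : ∑ i ∈ F, lam i ≤ 1) :
    Φ₀.toFun (∑ i ∈ F, lam i * x i) ≤ ∑ i ∈ F, (lam i : ℝ≥0∞) * Φ₀.toFun (x i) := by
  induction F using Finset.cons_induction generalizing lam with
  | empty => simp [Φ₀.map_zero']
  | cons a s ha ih =>
    rw [Finset.sum_cons] at h
    rw [Finset.sum_cons, Finset.sum_cons]
    have hla : lam a ≤ 1 := le_trans le_self_add h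
    have hsum : ∑ i ∈ s, lam i ≤ 1 - lam a := le_tsub_of_add_le_left h
    rcases eq_or_ne (1 - lam a) 0 with ht0 | ht0
    · have hz : ∑ i ∈ s, lam i = 0 := le_antisymm (hsum.trans_eq ht0) (zero_le)
      have hzi : ∀ i ∈ s, lam i = 0 := fun i hi => (Finset.sum_eq_zero_iff.mp hz) i hi
      have hx0 : ∑ i ∈ s, lam i * x i = 0 :=
        Finset.sum_eq_zero fun i hi => by rw [hzi i hi, zero_mul]
      have hla1 : lam a = 1 := le_antisymm hla (tsub_eq_zero_iff_le.mp ht0)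
      rw [hx0, add_zero, hla1, one_mul]
      calc Φ₀.toFun (x a) ≤ (1 : ℝ≥0∞) * Φ₀.toFun (x a) := by rw [one_mul]
        _ ≤ _ := by
          rw [show ((1 : ℝ≥0) : ℝ≥0∞) = (1 : ℝ≥0∞) from rfl]
          exact le_self_add
    · have hty : (1 - lam a) * ((∑ i ∈ s, lam i * x i) / (1 - lam a))
          = ∑ i ∈ s, lam i * x i := by
        rw [mul_comm]; exact div_mul_cancel₀ _ ht0
      have hconv := Φ₀.convex' (lam a) (x a) ((∑ i ∈ s, lam i * x i) / (1 - lam a)) hla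
      rw [hty] at hconv
      refine le_trans hconv (add_le_add_right ?_ _)
      have hIHsum : ∑ i ∈ s, lam i / (1 - lam a) ≤ 1 := by
        rw [← Finset.sum_div]
        apply (div_le_iff₀ (pos_iff_ne_zero.mpr ht0)).mpr
        rw [one_mul]; exact hsum
      have hy : (∑ i ∈ s, lam i * x i) / (1 - lam a)
          = ∑ i ∈ s, (lam i / (1 - lam a)) * x i := by
        rw [Finset.sum_div]
        exact Finset.sum_congr rfl fun i _ => by rw [mul_div_right_comm]
      have hIH := ih (fun i => lam i / (1 - lam a)) hIHsum
      rw [← hy] at hIH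
      calc ((1 - lam a : ℝ≥0) : ℝ≥0∞) * Φ₀.toFun ((∑ i ∈ s, lam i * x i) / (1 - lam a))
          ≤ ((1 - lam a : ℝ≥0) : ℝ≥0∞) * ∑ i ∈ s, ((lam i / (1 - lam a) : ℝ≥0) : ℝ≥0∞) * Φ₀.toFun (x i) :=
            mul_le_mul_right hIH _
        _ = ∑ i ∈ s, (lam i : ℝ≥0∞) * Φ₀.toFun (x i) := by
            rw [Finset.mul_sum]
            refine Finset.sum_congr rfl fun i _ => ?_
            rw [ENNReal.coe_div ht0, ← mul_assoc,
              ENNReal.mul_div_cancel (by exact_mod_cast ht0) ENNReal.coe_ne_top]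

lemma psi_jensen_half (Φ₀ : YoungFunction) {ι : Type*} (lam x : ι → ℝ≥0∞)
    (hlam : ∑' i, lam i ≤ 1) :
    extendPhi Φ₀.toFun ((∑' i, lam i * x i) / 2) ≤
      ∑' i, lam i * extendPhi Φ₀.toFun (x i) := by
  rcases eq_or_ne (∑' i, lam i * extendPhi Φ₀.toFun (x i)) ∞ with hRt | hRt
  · rw [hRt]; exact le_top
  obtain ⟨t₁, ht₁, hgrow⟩ := psi_growth Φ₀
  have hSne : (∑' i, lam i * x i) ≠ ∞ := by
    intro hStop
    have hb : ∀ i, lam i * x i ≤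
        (t₁ : ℝ≥0∞) * (lam i * extendPhi Φ₀.toFun (x i)) + (t₁ : ℝ≥0∞) * lam i := by
      intro i
      calc lam i * x i ≤ lam i * ((t₁ : ℝ≥0∞) * extendPhi Φ₀.toFun (x i) + t₁) :=
            mul_le_mul_right (hgrow _) _
        _ = (t₁ : ℝ≥0∞) * (lam i * extendPhi Φ₀.toFun (x i)) + (t₁ : ℝ≥0∞) * lam i := by ring
    have hle := ENNReal.tsum_le_tsum hb
    rw [ENNReal.tsum_add, ENNReal.tsum_mul_left, ENNReal.tsum_mul_left, hStop] at hle
    have hfin : (t₁ : ℝ≥0∞) * (∑' i, lam i * extendPhi Φ₀.toFun (x i))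
        + (t₁ : ℝ≥0∞) * ∑' i, lam i ≠ ∞ := by
      apply ENNReal.add_ne_top.mpr
      exact ⟨ENNReal.mul_ne_top ENNReal.coe_ne_top hRt,
        ENNReal.mul_ne_top ENNReal.coe_ne_top (lt_of_le_of_lt hlam ENNReal.one_lt_top).ne⟩
    exact hfin (top_le_iff.mp hle)
  rcases eq_or_ne (∑' i, lam i * x i) 0 with hS0 | hS0
  · rw [hS0, ENNReal.zero_div, psi_zero]
    exact zero_le
  · have hhalf : (∑' i, lam i * x i) / 2 < ∑' i, lam i * x i := ENNReal.half_lt_self hS0 hSne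
    have hlt : (∑' i, lam i * x i) / 2 < ⨆ F : Finset ι, ∑ i ∈ F, lam i * x i := by
      rw [← ENNReal.tsum_eq_iSup_sum]; exact hhalf
    obtain ⟨F, hF⟩ := lt_iSup_iff.mp hlt
    have hFeq : ∑ i ∈ F.filter (fun i => lam i ≠ 0), lam i * x i = ∑ i ∈ F, lam i * x i := by
      apply Finset.sum_filter_of_ne
      intro i _ hne h0
      exact hne (by rw [h0, zero_mul])
    set F' := F.filter (fun i => lam i ≠ 0) with hF'def
    have hxF : ∀ i ∈ F', x i ≠ ∞ := by
      intro i hi hxi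
      have hlam0 : lam i ≠ 0 := (Finset.mem_filter.mp hi).2
      have hinf : lam i * x i = ∞ := by rw [hxi, ENNReal.mul_top hlam0]
      have hle := ENNReal.le_tsum (f := fun j => lam j * x j) i
      rw [hinf] at hle
      exact hSne (top_le_iff.mp hle)
    have hlamF : ∀ i ∈ F', lam i ≠ ∞ := fun i _ =>
      (lt_of_le_of_lt (le_trans (ENNReal.le_tsum i) hlam) ENNReal.one_lt_top).ne
    have hcoe : ∑ i ∈ F', lam i * x i
        = ((∑ i ∈ F', (lam i).toNNReal * (x i).toNNReal : ℝ≥0) : ℝ≥0∞) := by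
      rw [ENNReal.coe_finset_sum]
      refine Finset.sum_congr rfl fun i hi => ?_
      rw [ENNReal.coe_mul, ENNReal.coe_toNNReal (hlamF i hi), ENNReal.coe_toNNReal (hxF i hi)]
    have hsum1 : ∑ i ∈ F', (lam i).toNNReal ≤ 1 := by
      have h1 : ((∑ i ∈ F', (lam i).toNNReal : ℝ≥0) : ℝ≥0∞) = ∑ i ∈ F', lam i := by
        rw [ENNReal.coe_finset_sum]
        exact Finset.sum_congr rfl fun i hi => ENNReal.coe_toNNReal (hlamF i hi)
      have h2 : ((∑ i ∈ F', (lam i).toNNReal : ℝ≥0) : ℝ≥0∞) ≤ 1 := by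
        rw [h1]; exact le_trans (ENNReal.sum_le_tsum F') hlam
      exact_mod_cast h2
    have hjen := young_jensen_finset Φ₀ F' (fun i => (lam i).toNNReal)
      (fun i => (x i).toNNReal) hsum1
    calc extendPhi Φ₀.toFun ((∑' i, lam i * x i) / 2)
        ≤ extendPhi Φ₀.toFun (∑ i ∈ F', lam i * x i) :=
          psi_mono Φ₀ (by rw [hFeq]; exact hF.le)
      _ = Φ₀.toFun (∑ i ∈ F', (lam i).toNNReal * (x i).toNNReal) := by
          rw [hcoe, psi_coe]
      _ ≤ ∑ i ∈ F', ((lam i).toNNReal : ℝ≥0∞) * Φ₀.toFun ((x i).toNNReal) := hjen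
      _ = ∑ i ∈ F', lam i * extendPhi Φ₀.toFun (x i) :=
          Finset.sum_congr rfl fun i hi => by
            rw [ENNReal.coe_toNNReal (hlamF i hi), psi_ne_top Φ₀ (hxF i hi)]
      _ ≤ ∑' i, lam i * extendPhi Φ₀.toFun (x i) := ENNReal.sum_le_tsum F'

/-! ### The convexified Luxemburg functional `MNorm` -/

/-- Admissible set for the (convexified) Luxemburg functional. -/
def MSet (Φ₀ : YoungFunction) {ι : Type*} (u : ι → ℝ≥0∞) : Set ℝ≥0∞ :=
  {μ : ℝ≥0∞ | 0 < μ ∧ μ ≠ ∞ ∧ ∑' n, extendPhi Φ₀.toFun (u n / μ) ≤ 1}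

/-- The (convexified) Luxemburg functional. -/
def MNorm (Φ₀ : YoungFunction) {ι : Type*} (u : ι → ℝ≥0∞) : ℝ≥0∞ :=
  sInf (MSet Φ₀ u)

lemma MSet_upward (Φ₀ : YoungFunction) {ι : Type*} {u : ι → ℝ≥0∞} {μ μ' : ℝ≥0∞}
    (hmem : μ ∈ MSet Φ₀ u) (hle : μ ≤ μ') (hμ' : μ' ≠ ∞) : μ' ∈ MSet Φ₀ u :=
  ⟨lt_of_lt_of_le hmem.1 hle, hμ',
    le_trans (ENNReal.tsum_le_tsum fun n =>
      psi_mono Φ₀ (ENNReal.div_le_div_left hle _)) hmem.2.2⟩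

lemma mem_MSet_of_lt (Φ₀ : YoungFunction) {ι : Type*} {u : ι → ℝ≥0∞} {μ' : ℝ≥0∞}
    (h : MNorm Φ₀ u < μ') (hμ' : μ' ≠ ∞) : μ' ∈ MSet Φ₀ u := by
  obtain ⟨μ, hμ, hlt⟩ := sInf_lt_iff.mp h
  exact MSet_upward Φ₀ hμ hlt.le hμ'

lemma MNorm_mono (Φ₀ : YoungFunction) {ι : Type*} {u v : ι → ℝ≥0∞}
    (h : ∀ n, u n ≤ v n) : MNorm Φ₀ u ≤ MNorm Φ₀ v :=
  sInf_le_sInf fun μ hμ => ⟨hμ.1, hμ.2.1,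
    le_trans (ENNReal.tsum_le_tsum fun n =>
      psi_mono Φ₀ (ENNReal.div_le_div_right (h n) _)) hμ.2.2⟩

lemma MNorm_zero (Φ₀ : YoungFunction) {ι : Type*} :
    MNorm Φ₀ (fun _ : ι => (0 : ℝ≥0∞)) = 0 := by
  apply le_antisymm _ (zero_le)
  apply ENNReal.le_of_forall_pos_le_add
  intro ε hε _
  rw [zero_add]
  apply sInf_le
  exact ⟨ENNReal.coe_pos.mpr hε, ENNReal.coe_ne_top,
    by simp [ENNReal.zero_div, psi_zero Φ₀]⟩

lemma MNorm_smul_le (Φ₀ : YoungFunction) {ι : Type*} {u : ι → ℝ≥0∞} {c : ℝ≥0∞}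
    (hc0 : c ≠ 0) (hct : c ≠ ∞) :
    MNorm Φ₀ (fun n => c * u n) ≤ c * MNorm Φ₀ u := by
  rcases eq_or_ne (MNorm Φ₀ u) ∞ with htop | htop
  · rw [htop, ENNReal.mul_top hc0]; exact le_top
  have key : ∀ μ ∈ MSet Φ₀ u, MNorm Φ₀ (fun n => c * u n) / c ≤ μ := by
    intro μ hμ
    have hmem : c * μ ∈ MSet Φ₀ (fun n => c * u n) := by
      refine ⟨ENNReal.mul_pos hc0 hμ.1.ne', ENNReal.mul_ne_top hct hμ.2.1, ?_⟩
      refine le_trans (le_of_eq (tsum_congr fun n => ?_)) hμ.2.2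
      rw [ENNReal.mul_div_mul_left _ _ hc0 hct]
    have h1 : MNorm Φ₀ (fun n => c * u n) ≤ c * μ := sInf_le hmem
    rw [ENNReal.div_le_iff_le_mul (Or.inl hc0) (Or.inl hct)]
    exact h1.trans_eq (mul_comm _ _)
  have h2 : MNorm Φ₀ (fun n => c * u n) / c ≤ MNorm Φ₀ u := le_sInf key
  rw [ENNReal.div_le_iff_le_mul (Or.inl hc0) (Or.inl hct)] at h2
  exact h2.trans_eq (mul_comm _ _)

lemma MNorm_smul (Φ₀ : YoungFunction) {ι : Type*} (u : ι → ℝ≥0∞) (c : ℝ≥0∞)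
    (hct : c ≠ ∞) : MNorm Φ₀ (fun n => c * u n) = c * MNorm Φ₀ u := by
  rcases eq_or_ne c 0 with rfl | hc0
  · simp only [zero_mul]
    rw [MNorm_zero]
  apply le_antisymm (MNorm_smul_le Φ₀ hc0 hct)
  have h2 := MNorm_smul_le Φ₀ (u := fun n => c * u n) (c := c⁻¹)
    (ENNReal.inv_ne_zero.mpr hct) (ENNReal.inv_ne_top.mpr hc0)
  have heq : (fun n => c⁻¹ * (c * u n)) = u := by
    funext n; rw [← mul_assoc, ENNReal.inv_mul_cancel hc0 hct, one_mul]
  rw [heq] at h2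
  calc c * MNorm Φ₀ u ≤ c * (c⁻¹ * MNorm Φ₀ (fun n => c * u n)) := mul_le_mul_right h2 c
    _ = MNorm Φ₀ (fun n => c * u n) := by
        rw [← mul_assoc, ENNReal.mul_inv_cancel hc0 hct, one_mul]

lemma MNorm_translate (Φ₀ : YoungFunction) {ι : Type*} [AddGroup ι] (u : ι → ℝ≥0∞) (k : ι) :
    MNorm Φ₀ (fun n => u (n - k)) = MNorm Φ₀ u := by
  have heq : ∀ μ : ℝ≥0∞, (∑' n, extendPhi Φ₀.toFun (u (n - k) / μ))
      = ∑' m, extendPhi Φ₀.toFun (u m / μ) := fun μ => by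
    simpa using (Equiv.subRight k).tsum_eq (fun m => extendPhi Φ₀.toFun (u m / μ))
  unfold MNorm MSet
  congr 1
  ext μ
  simp only [Set.mem_setOf_eq, heq μ]

lemma MNorm_tsum_le (Φ₀ : YoungFunction) {ι κ : Type*} [Countable κ] (u : κ → ι → ℝ≥0∞) :
    MNorm Φ₀ (fun n => ∑' j, u j n) ≤ 2 * ∑' j, MNorm Φ₀ (u j) := by
  cases isEmpty_or_nonempty κ with
  | inl h =>
    simp only [tsum_empty]
    rw [MNorm_zero]
    exact zero_le
  | inr h =>
    rcases eq_or_ne (∑' j, MNorm Φ₀ (u j)) ∞ with hRt | hRt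
    · rw [hRt, ENNReal.mul_top (by norm_num)]; exact le_top
    have hfin : ∀ j, MNorm Φ₀ (u j) ≠ ∞ := fun j =>
      (lt_of_le_of_lt (ENNReal.le_tsum j) (lt_top_iff_ne_top.mpr hRt)).ne
    apply ENNReal.le_of_forall_pos_le_add
    intro ε hε _
    have hδ0 : ((ε / 2 : ℝ≥0) : ℝ≥0∞) ≠ 0 := by
      simp only [ne_eq, ENNReal.coe_eq_zero]
      positivity
    obtain ⟨w, hwpos, hwsum⟩ := ENNReal.exists_pos_sum_of_countable' hδ0 κ
    have hwfin : ∀ j, w j ≠ ∞ := fun j =>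
      ((ENNReal.le_tsum j).trans_lt (hwsum.trans_le le_top)).ne
    have hμjmem : ∀ j, MNorm Φ₀ (u j) + w j ∈ MSet Φ₀ (u j) := by
      intro j
      apply mem_MSet_of_lt Φ₀
      · exact ENNReal.lt_add_right (hfin j) (hwpos j).ne'
      · exact ENNReal.add_ne_top.mpr ⟨hfin j, hwfin j⟩
    have hμj0 : ∀ j, MNorm Φ₀ (u j) + w j ≠ 0 := fun j =>
      (lt_of_lt_of_le (hwpos j) le_add_self).ne'
    have hμjt : ∀ j, MNorm Φ₀ (u j) + w j ≠ ∞ := fun j =>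
      ENNReal.add_ne_top.mpr ⟨hfin j, hwfin j⟩
    set μ := ∑' j, (MNorm Φ₀ (u j) + w j) with hμdef
    have hμeq : μ = (∑' j, MNorm Φ₀ (u j)) + ∑' j, w j := ENNReal.tsum_add
    have hμle : μ ≤ (∑' j, MNorm Φ₀ (u j)) + ((ε / 2 : ℝ≥0) : ℝ≥0∞) := by
      rw [hμeq]; exact add_le_add_right hwsum.le _
    have hμt : μ ≠ ∞ :=
      (lt_of_le_of_lt hμle (ENNReal.add_lt_top.mpr
        ⟨lt_top_iff_ne_top.mpr hRt, ENNReal.coe_lt_top⟩)).ne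
    have hμ0 : μ ≠ 0 := by
      obtain ⟨j⟩ := h
      exact (lt_of_lt_of_le (lt_of_lt_of_le (hwpos j) le_add_self)
        (ENNReal.le_tsum j)).ne'
    have hlam1 : ∑' j, (MNorm Φ₀ (u j) + w j) / μ ≤ 1 := by
      simp_rw [div_eq_mul_inv]
      rw [ENNReal.tsum_mul_right, ← div_eq_mul_inv, ← hμdef]
      exact ENNReal.div_self_le_one
    have hmain : 2 * μ ∈ MSet Φ₀ (fun n => ∑' j, u j n) := by
      refine ⟨ENNReal.mul_pos (by norm_num) hμ0, ENNReal.mul_ne_top ENNReal.ofNat_ne_top hμt, ?_⟩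
      have hterm : ∀ n, extendPhi Φ₀.toFun ((∑' j, u j n) / (2 * μ)) ≤
          ∑' j, ((MNorm Φ₀ (u j) + w j) / μ) * extendPhi Φ₀.toFun (u j n / (MNorm Φ₀ (u j) + w j)) := by
        intro n
        have harg : (∑' j, u j n) / (2 * μ)
            = (∑' j, ((MNorm Φ₀ (u j) + w j) / μ) * (u j n / (MNorm Φ₀ (u j) + w j))) / 2 := by
          have hj : ∀ j, ((MNorm Φ₀ (u j) + w j) / μ) * (u j n / (MNorm Φ₀ (u j) + w j))
              = u j n * μ⁻¹ := by
            intro j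
            rw [div_eq_mul_inv, div_eq_mul_inv]
            calc (MNorm Φ₀ (u j) + w j) * μ⁻¹ * (u j n * (MNorm Φ₀ (u j) + w j)⁻¹)
                = ((MNorm Φ₀ (u j) + w j) * (MNorm Φ₀ (u j) + w j)⁻¹) * (u j n * μ⁻¹) := by ring
              _ = u j n * μ⁻¹ := by rw [ENNReal.mul_inv_cancel (hμj0 j) (hμjt j), one_mul]
          rw [tsum_congr hj, ENNReal.tsum_mul_right, div_eq_mul_inv _ (2 * μ),
            ENNReal.mul_inv (Or.inl (by norm_num)) (Or.inl ENNReal.ofNat_ne_top),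
            div_eq_mul_inv _ 2]
          ring
        rw [harg]
        exact psi_jensen_half Φ₀ (fun j => (MNorm Φ₀ (u j) + w j) / μ)
          (fun j => u j n / (MNorm Φ₀ (u j) + w j)) hlam1
      calc ∑' n, extendPhi Φ₀.toFun ((∑' j, u j n) / (2 * μ))
          ≤ ∑' n, ∑' j, ((MNorm Φ₀ (u j) + w j) / μ) *
              extendPhi Φ₀.toFun (u j n / (MNorm Φ₀ (u j) + w j)) := ENNReal.tsum_le_tsum hterm
        _ = ∑' j, ((MNorm Φ₀ (u j) + w j) / μ) *
              ∑' n, extendPhi Φ₀.toFun (u j n / (MNorm Φ₀ (u j) + w j)) := by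
            rw [ENNReal.tsum_comm]
            exact tsum_congr fun j => ENNReal.tsum_mul_left
        _ ≤ ∑' j, ((MNorm Φ₀ (u j) + w j) / μ) * 1 :=
            ENNReal.tsum_le_tsum fun j => mul_le_mul_right (hμjmem j).2.2 _
        _ ≤ 1 := by simpa using hlam1
    have hfin2 : MNorm Φ₀ (fun n => ∑' j, u j n) ≤ 2 * μ := sInf_le hmain
    have h2δ : (2 : ℝ≥0∞) * ((ε / 2 : ℝ≥0) : ℝ≥0∞) = (ε : ℝ≥0∞) := by
      rw [show ((2 : ℝ≥0∞)) = ((2 : ℝ≥0) : ℝ≥0∞) from rfl, ← ENNReal.coe_mul]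
      congr 1
      rw [mul_comm]
      exact div_mul_cancel₀ _ (by norm_num)
    calc MNorm Φ₀ (fun n => ∑' j, u j n) ≤ 2 * μ := hfin2
      _ ≤ 2 * ((∑' j, MNorm Φ₀ (u j)) + ((ε / 2 : ℝ≥0) : ℝ≥0∞)) := mul_le_mul_right hμle _
      _ = 2 * (∑' j, MNorm Φ₀ (u j)) + (ε : ℝ≥0∞) := by rw [mul_add, h2δ]

/-! ### Relation with `luxNorm` and an `rpow`-subadditivity lemma -/

lemma rpow_tsum_le {ι : Type*} (f : ι → ℝ≥0∞) {r : ℝ} (hr0 : 0 < r) (hr1 : r ≤ 1) :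
    (∑' i, f i) ^ r ≤ ∑' i, f i ^ r := by
  have hfin : ∀ F : Finset ι, (∑ i ∈ F, f i) ^ r ≤ ∑ i ∈ F, f i ^ r := by
    intro F
    induction F using Finset.cons_induction with
    | empty => simp [ENNReal.zero_rpow_of_pos hr0]
    | cons a s ha ih =>
      rw [Finset.sum_cons, Finset.sum_cons]
      exact le_trans (ENNReal.rpow_add_le_add_rpow _ _ hr0.le hr1) (add_le_add_right ih _)
  rw [ENNReal.tsum_eq_iSup_sum]
  have hmap : (⨆ F : Finset ι, ∑ i ∈ F, f i) ^ r = ⨆ F : Finset ι, (∑ i ∈ F, f i) ^ r :=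
    OrderIso.map_iSup (ENNReal.orderIsoRpow r hr0) (fun F : Finset ι => ∑ i ∈ F, f i)
  rw [hmap]
  exact iSup_le fun F => le_trans (hfin F) (ENNReal.sum_le_tsum F)

lemma lux_eq_MNorm {ι : Type*} [MeasurableSpace ι] [MeasurableSingletonClass ι]
    (Φ₀ : YoungFunction) {Φ : ℝ≥0 → ℝ≥0∞} {r : ℝ} (hr : 0 < r)
    (hΦ : ∀ t : ℝ≥0, Φ t = Φ₀.toFun (t ^ r)) (G : ι → ℝ≥0∞) :
    luxNorm Measure.count Φ G = MNorm Φ₀ (fun n => G n ^ r) ^ (1 / r) := by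
  have key : ∀ t : ℝ≥0∞, extendPhi Φ t = extendPhi Φ₀.toFun (t ^ r) := by
    intro t
    rcases eq_or_ne t ∞ with rfl | ht
    · simp [extendPhi, ENNReal.top_rpow_of_pos hr]
    · have htr : t ^ r ≠ ∞ := ENNReal.rpow_ne_top_of_nonneg hr.le ht
      rw [psi_ne_top Φ₀ htr]
      simp only [extendPhi, if_neg ht]
      rw [hΦ, ENNReal.toNNReal_rpow]
  have hmem : ∀ lam : ℝ≥0∞,
      (0 < lam ∧ lam ≠ ∞ ∧ ∫⁻ n, extendPhi Φ (G n / lam) ∂Measure.count ≤ 1) ↔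
      (0 < lam ^ r ∧ lam ^ r ≠ ∞ ∧ ∑' n, extendPhi Φ₀.toFun (G n ^ r / lam ^ r) ≤ 1) := by
    intro lam
    rw [lintegral_count]
    have h1 : ∀ n, extendPhi Φ (G n / lam) = extendPhi Φ₀.toFun (G n ^ r / lam ^ r) := by
      intro n; rw [key, ENNReal.div_rpow_of_nonneg _ _ hr.le]
    rw [tsum_congr h1]
    constructor
    · rintro ⟨h0, ht, hs⟩
      exact ⟨ENNReal.rpow_pos h0 ht, ENNReal.rpow_ne_top_of_nonneg hr.le ht, hs⟩
    · rintro ⟨h0, ht, hs⟩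
      have hlam0 : lam ≠ 0 := by
        rintro rfl
        rw [ENNReal.zero_rpow_of_pos hr] at h0
        exact lt_irrefl _ h0
      have hlamt : lam ≠ ∞ := by
        rintro rfl
        rw [ENNReal.top_rpow_of_pos hr] at ht
        exact ht rfl
      exact ⟨pos_iff_ne_zero.mpr hlam0, hlamt, hs⟩
  have himage : MSet Φ₀ (fun n => G n ^ r)
      = (fun lam : ℝ≥0∞ => lam ^ r) ''
        {lam : ℝ≥0∞ | 0 < lam ∧ lam ≠ ∞ ∧ ∫⁻ n, extendPhi Φ (G n / lam) ∂Measure.count ≤ 1} := by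
    ext μ
    constructor
    · rintro ⟨h0, ht, hs⟩
      have hpow : (μ ^ (1 / r)) ^ r = μ := by
        rw [← ENNReal.rpow_mul, one_div, inv_mul_cancel₀ hr.ne', ENNReal.rpow_one]
      refine ⟨μ ^ (1 / r), ?_, hpow⟩
      rw [Set.mem_setOf_eq, hmem (μ ^ (1 / r)), hpow]
      exact ⟨h0, ht, hs⟩
    · rintro ⟨lam, hlam, rfl⟩
      exact (hmem lam).1 hlam
  have hsinf := OrderIso.map_sInf (ENNReal.orderIsoRpow r hr)
    {lam : ℝ≥0∞ | 0 < lam ∧ lam ≠ ∞ ∧ ∫⁻ n, extendPhi Φ (G n / lam) ∂Measure.count ≤ 1}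
  have h5 : sInf ((fun lam : ℝ≥0∞ => lam ^ r) ''
      {lam : ℝ≥0∞ | 0 < lam ∧ lam ≠ ∞ ∧ ∫⁻ n, extendPhi Φ (G n / lam) ∂Measure.count ≤ 1})
      = (sInf {lam : ℝ≥0∞ | 0 < lam ∧ lam ≠ ∞ ∧
          ∫⁻ n, extendPhi Φ (G n / lam) ∂Measure.count ≤ 1}) ^ r := by
    rw [sInf_image]
    exact hsinf.symm
  rw [MNorm, himage, h5, ← ENNReal.rpow_mul, mul_one_div, div_self hr.ne', ENNReal.rpow_one]
  rfl

/-! ### Pointwise convolution bound -/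

lemma ptw {ι : Type*} [AddCommGroup ι] {r : ℝ} (hr0 : 0 < r) (hr1 : r ≤ 1)
    (a b : ι → ℂ) (W₀ W₁ W₂ : ι → ℝ) (hW₁ : ∀ k, 0 ≤ W₁ k)
    {Cw : ℝ} (hCw : 0 ≤ Cw) (hW : ∀ n k : ι, W₀ n ≤ Cw * W₁ k * W₂ (n - k)) (n : ι) :
    wFun W₀ (discConv a b) n ^ r ≤
      ENNReal.ofReal Cw ^ r * ∑' k, wFun W₁ a k ^ r * wFun W₂ b (n - k) ^ r := by
  have hA : (‖discConv a b n‖₊ : ℝ≥0∞) ≤ ∑' k, ((‖a k‖₊ : ℝ≥0∞) * ‖b (n - k)‖₊) := by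
    by_cases hs : Summable fun k => a k * b (n - k)
    · have hsn : Summable fun k => ‖a k * b (n - k)‖₊ := by
        rw [← NNReal.summable_coe]
        simpa [coe_nnnorm] using (summable_norm_iff.mpr hs)
      calc (‖discConv a b n‖₊ : ℝ≥0∞)
          ≤ ((∑' k, ‖a k * b (n - k)‖₊ : ℝ≥0) : ℝ≥0∞) := by
            exact_mod_cast nnnorm_tsum_le hsn
        _ = ∑' k, ((‖a k * b (n - k)‖₊ : ℝ≥0∞)) := ENNReal.coe_tsum hsn
        _ = ∑' k, ((‖a k‖₊ : ℝ≥0∞) * ‖b (n - k)‖₊) :=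
            tsum_congr fun k => by rw [nnnorm_mul, ENNReal.coe_mul]
    · simp [discConv, tsum_eq_zero_of_not_summable hs]
  have hW' : ∀ k, ENNReal.ofReal (W₀ n) ≤
      ENNReal.ofReal Cw * ENNReal.ofReal (W₁ k) * ENNReal.ofReal (W₂ (n - k)) := by
    intro k
    rw [← ENNReal.ofReal_mul hCw, ← ENNReal.ofReal_mul (mul_nonneg hCw (hW₁ k))]
    exact ENNReal.ofReal_le_ofReal (hW n k)
  have hterm : ∀ k, (‖a k‖₊ : ℝ≥0∞) * ‖b (n - k)‖₊ * ENNReal.ofReal (W₀ n) ≤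
      ENNReal.ofReal Cw * (wFun W₁ a k * wFun W₂ b (n - k)) := by
    intro k
    calc (‖a k‖₊ : ℝ≥0∞) * ‖b (n - k)‖₊ * ENNReal.ofReal (W₀ n)
        ≤ (‖a k‖₊ : ℝ≥0∞) * ‖b (n - k)‖₊ *
          (ENNReal.ofReal Cw * ENNReal.ofReal (W₁ k) * ENNReal.ofReal (W₂ (n - k))) :=
          mul_le_mul_right (hW' k) _
      _ = ENNReal.ofReal Cw * (wFun W₁ a k * wFun W₂ b (n - k)) := by
          simp only [wFun]; ring
  have h1 : wFun W₀ (discConv a b) n ≤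
      ∑' k, ENNReal.ofReal Cw * (wFun W₁ a k * wFun W₂ b (n - k)) := by
    calc wFun W₀ (discConv a b) n
        = (‖discConv a b n‖₊ : ℝ≥0∞) * ENNReal.ofReal (W₀ n) := rfl
      _ ≤ (∑' k, (‖a k‖₊ : ℝ≥0∞) * ‖b (n - k)‖₊) * ENNReal.ofReal (W₀ n) :=
          mul_le_mul_left hA _
      _ = ∑' k, (‖a k‖₊ : ℝ≥0∞) * ‖b (n - k)‖₊ * ENNReal.ofReal (W₀ n) :=
          ENNReal.tsum_mul_right.symm
      _ ≤ ∑' k, ENNReal.ofReal Cw * (wFun W₁ a k * wFun W₂ b (n - k)) :=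
          ENNReal.tsum_le_tsum hterm
  calc wFun W₀ (discConv a b) n ^ r
      ≤ (∑' k, ENNReal.ofReal Cw * (wFun W₁ a k * wFun W₂ b (n - k))) ^ r :=
        ENNReal.rpow_le_rpow h1 hr0.le
    _ ≤ ∑' k, (ENNReal.ofReal Cw * (wFun W₁ a k * wFun W₂ b (n - k))) ^ r :=
        rpow_tsum_le _ hr0 hr1
    _ = ENNReal.ofReal Cw ^ r * ∑' k, wFun W₁ a k ^ r * wFun W₂ b (n - k) ^ r := by
        rw [← ENNReal.tsum_mul_left]
        exact tsum_congr fun k => by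
          rw [ENNReal.mul_rpow_of_nonneg _ _ hr0.le, ENNReal.mul_rpow_of_nonneg _ _ hr0.le]

lemma mixed_eq_MNorm {ι₁ ι₂ : Type*}
    [MeasurableSpace ι₁] [MeasurableSingletonClass ι₁]
    [MeasurableSpace ι₂] [MeasurableSingletonClass ι₂]
    (Φ₀₁ Φ₀₂ : YoungFunction) {Φ₁ Φ₂ : ℝ≥0 → ℝ≥0∞} {r : ℝ} (hr : 0 < r)
    (hΦ₁ : ∀ t : ℝ≥0, Φ₁ t = Φ₀₁.toFun (t ^ r)) (hΦ₂ : ∀ t : ℝ≥0, Φ₂ t = Φ₀₂.toFun (t ^ r))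
    (G : ι₁ × ι₂ → ℝ≥0∞) :
    mixedLux Measure.count Measure.count Φ₁ Φ₂ G
      = MNorm Φ₀₂ (fun ν => MNorm Φ₀₁ (fun n => G (n, ν) ^ r)) ^ (1 / r) := by
  unfold mixedLux
  have h1 : (fun ν => luxNorm Measure.count Φ₁ (fun n => G (n, ν)))
      = fun ν => MNorm Φ₀₁ (fun n => G (n, ν) ^ r) ^ (1 / r) :=
    funext fun ν => lux_eq_MNorm Φ₀₁ hr hΦ₁ _
  rw [h1, lux_eq_MNorm Φ₀₂ hr hΦ₂]
  congr 2
  funext ν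
  rw [← ENNReal.rpow_mul, one_div, inv_mul_cancel₀ hr.ne', ENNReal.rpow_one]

end S15Aux

open S15Aux in
/-- Discrete Young-type convolution estimates for Orlicz
sequence spaces on a lattice `Λ` and on `Λ² = Λ×Λ`. -/
theorem statement15 (d : ℕ) (r₀ : ℝ) (hr : r₀ ∈ Set.Ioc (0:ℝ) 1)
    (Φ Φ₁ Φ₂ : ℝ≥0 → ℝ≥0∞) (hΦ : IsQuasiYoung Φ r₀)
    (hΦ₁ : IsQuasiYoung Φ₁ r₀) (hΦ₂ : IsQuasiYoung Φ₂ r₀)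
    (T : RD d →ₗ[ℝ] RD d) (hT : Function.Bijective T) :
    (∀ ω₀ ω₁ ω₂ : RD d → ℝ, InPE ω₀ → InPE ω₁ → InPE ω₂ →
      (∃ C > 0, ∀ x y : RD d, ω₀ (x + y) ≤ C * ω₁ x * ω₂ y) →
      ∃ C > 0, ∀ a b : (Fin d → ℤ) → ℂ,
        ellRNorm r₀ (fun k => ω₁ (T (ivec k))) a ≠ ∞ →
        luxNorm Measure.count Φ (wFun (fun k => ω₂ (T (ivec k))) b) ≠ ∞ →
        luxNorm Measure.count Φ (wFun (fun k => ω₀ (T (ivec k))) (discConv a b)) ≤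
          ENNReal.ofReal C * ellRNorm r₀ (fun k => ω₁ (T (ivec k))) a *
            luxNorm Measure.count Φ (wFun (fun k => ω₂ (T (ivec k))) b)) ∧
    (∀ ω₀ ω₁ ω₂ : PS d → ℝ, InPE ω₀ → InPE ω₁ → InPE ω₂ →
      (∃ C > 0, ∀ X Y : PS d, ω₀ (X + Y) ≤ C * ω₁ X * ω₂ Y) →
      ∃ C > 0, ∀ a b : IdxD d → ℂ,
        ellRNorm r₀ (fun kκ : IdxD d => ω₁ (T (ivec kκ.1), T (ivec kκ.2))) a ≠ ∞ →
        seqNorm d Φ₁ Φ₂ (fun kκ => ω₂ (T (ivec kκ.1), T (ivec kκ.2))) b ≠ ∞ →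
        seqNorm d Φ₁ Φ₂ (fun kκ => ω₀ (T (ivec kκ.1), T (ivec kκ.2))) (discConv a b) ≤
          ENNReal.ofReal C *
            ellRNorm r₀ (fun kκ : IdxD d => ω₁ (T (ivec kκ.1), T (ivec kκ.2))) a *
            seqNorm d Φ₁ Φ₂ (fun kκ => ω₂ (T (ivec kκ.1), T (ivec kκ.2))) b) := by
  obtain ⟨hr0, hr1⟩ := hr
  obtain ⟨Φ₀, hΦ₀⟩ := hΦ
  obtain ⟨Φ₀₁, hΦ₀₁⟩ := hΦ₁
  obtain ⟨Φ₀₂, hΦ₀₂⟩ := hΦ₂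
  have hivec : ∀ x y : Fin d → ℤ, T (ivec x) + T (ivec (y - x)) = T (ivec y) := by
    intro x y
    rw [← map_add]
    congr 1
    funext i
    simp only [ivec, Pi.add_apply, Pi.sub_apply]
    push_cast
    ring
  have hcancel : ∀ x : ℝ≥0∞, (x ^ (1 / r₀)) ^ r₀ = x := fun x => by
    rw [← ENNReal.rpow_mul, one_div, inv_mul_cancel₀ hr0.ne', ENNReal.rpow_one]
  have hcancel' : ∀ x : ℝ≥0∞, (x ^ r₀) ^ (1 / r₀) = x := fun x => by
    rw [← ENNReal.rpow_mul, mul_one_div, div_self hr0.ne', ENNReal.rpow_one]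
  constructor
  · -- Part 1
    rintro ω₀ ω₁ ω₂ ⟨hw₀, -⟩ ⟨hw₁, -⟩ ⟨hw₂, -⟩ ⟨Cw, hCw0, hCw⟩
    refine ⟨Cw * 2 ^ (1 / r₀), mul_pos hCw0 (Real.rpow_pos_of_pos two_pos _),
      fun a b _ _ => ?_⟩
    set W₀ : (Fin d → ℤ) → ℝ := fun k => ω₀ (T (ivec k)) with hW₀def
    set W₁ : (Fin d → ℤ) → ℝ := fun k => ω₁ (T (ivec k)) with hW₁def
    set W₂ : (Fin d → ℤ) → ℝ := fun k => ω₂ (T (ivec k)) with hW₂def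
    have hWmod : ∀ n k : Fin d → ℤ, W₀ n ≤ Cw * W₁ k * W₂ (n - k) := by
      intro n k
      have h2 := hCw (T (ivec k)) (T (ivec (n - k)))
      rw [hivec k n] at h2
      exact h2
    set A : (Fin d → ℤ) → ℝ≥0∞ := fun k => wFun W₁ a k ^ r₀ with hAdef
    set B : (Fin d → ℤ) → ℝ≥0∞ := fun m => wFun W₂ b m ^ r₀ with hBdef
    have hc't : ENNReal.ofReal Cw ^ r₀ ≠ ∞ :=
      ENNReal.rpow_ne_top_of_nonneg hr0.le ENNReal.ofReal_ne_top
    have hAfin : ∀ k, A k ≠ ∞ := fun k =>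
      ENNReal.rpow_ne_top_of_nonneg hr0.le
        (ENNReal.mul_ne_top ENNReal.coe_ne_top ENNReal.ofReal_ne_top)
    have key : MNorm Φ₀ (fun n => wFun W₀ (discConv a b) n ^ r₀) ≤
        ENNReal.ofReal Cw ^ r₀ * (2 * ((∑' k, A k) * MNorm Φ₀ B)) := by
      calc MNorm Φ₀ (fun n => wFun W₀ (discConv a b) n ^ r₀)
          ≤ MNorm Φ₀ (fun n => ENNReal.ofReal Cw ^ r₀ * ∑' k, A k * B (n - k)) :=
            MNorm_mono Φ₀ fun n =>
              ptw hr0 hr1 a b W₀ W₁ W₂ (fun k => (hw₁.1 _).le) hCw0.le hWmod n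
        _ = ENNReal.ofReal Cw ^ r₀ * MNorm Φ₀ (fun n => ∑' k, A k * B (n - k)) :=
            MNorm_smul Φ₀ _ _ hc't
        _ ≤ ENNReal.ofReal Cw ^ r₀ * (2 * ∑' k, MNorm Φ₀ (fun n => A k * B (n - k))) :=
            mul_le_mul_right (MNorm_tsum_le Φ₀ fun k n => A k * B (n - k)) _
        _ = ENNReal.ofReal Cw ^ r₀ * (2 * ∑' k, A k * MNorm Φ₀ B) := by
            congr 2
            refine tsum_congr fun k => ?_
            rw [MNorm_smul Φ₀ _ _ (hAfin k), MNorm_translate Φ₀ B k]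
        _ = ENNReal.ofReal Cw ^ r₀ * (2 * ((∑' k, A k) * MNorm Φ₀ B)) := by
            rw [ENNReal.tsum_mul_right]
    have hlux0 : luxNorm Measure.count Φ (wFun W₀ (discConv a b))
        = MNorm Φ₀ (fun n => wFun W₀ (discConv a b) n ^ r₀) ^ (1 / r₀) :=
      lux_eq_MNorm Φ₀ hr0 hΦ₀ _
    have hlux2 : luxNorm Measure.count Φ (wFun W₂ b) = MNorm Φ₀ B ^ (1 / r₀) :=
      lux_eq_MNorm Φ₀ hr0 hΦ₀ _
    have hellR : ellRNorm r₀ W₁ a = (∑' k, A k) ^ (1 / r₀) := rfl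
    rw [hlux0, hlux2, hellR]
    calc MNorm Φ₀ (fun n => wFun W₀ (discConv a b) n ^ r₀) ^ (1 / r₀)
        ≤ (ENNReal.ofReal Cw ^ r₀ * (2 * ((∑' k, A k) * MNorm Φ₀ B))) ^ (1 / r₀) :=
          ENNReal.rpow_le_rpow key (by positivity)
      _ = ENNReal.ofReal (Cw * 2 ^ (1 / r₀)) * (∑' k, A k) ^ (1 / r₀) * MNorm Φ₀ B ^ (1 / r₀) := by
          rw [ENNReal.mul_rpow_of_nonneg _ _ (by positivity),
            ENNReal.mul_rpow_of_nonneg _ _ (by positivity),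
            ENNReal.mul_rpow_of_nonneg _ _ (by positivity), hcancel',
            ENNReal.ofReal_mul hCw0.le, ← ENNReal.ofReal_rpow_of_pos two_pos,
            ENNReal.ofReal_ofNat]
          ring
  · -- Part 2
    rintro ω₀ ω₁ ω₂ ⟨hw₀, -⟩ ⟨hw₁, -⟩ ⟨hw₂, -⟩ ⟨Cw, hCw0, hCw⟩
    refine ⟨Cw * 4 ^ (1 / r₀), mul_pos hCw0 (Real.rpow_pos_of_pos (by norm_num) _),
      fun a b ha _ => ?_⟩
    set W₀ : IdxD d → ℝ := fun kκ => ω₀ (T (ivec kκ.1), T (ivec kκ.2)) with hW₀def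
    set W₁ : IdxD d → ℝ := fun kκ => ω₁ (T (ivec kκ.1), T (ivec kκ.2)) with hW₁def
    set W₂ : IdxD d → ℝ := fun kκ => ω₂ (T (ivec kκ.1), T (ivec kκ.2)) with hW₂def
    have hWmod : ∀ n k : IdxD d, W₀ n ≤ Cw * W₁ k * W₂ (n - k) := by
      intro n k
      have h2 := hCw (T (ivec k.1), T (ivec k.2)) (T (ivec (n - k).1), T (ivec (n - k).2))
      have hsum : ((T (ivec k.1), T (ivec k.2)) : PS d)
          + (T (ivec (n - k).1), T (ivec (n - k).2)) = (T (ivec n.1), T (ivec n.2)) := by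
        rw [Prod.mk_add_mk]
        rw [show (n - k).1 = n.1 - k.1 from rfl, show (n - k).2 = n.2 - k.2 from rfl,
          hivec k.1 n.1, hivec k.2 n.2]
      rw [hsum] at h2
      exact h2
    set A : IdxD d → ℝ≥0∞ := fun j => wFun W₁ a j ^ r₀ with hAdef
    set P : (Fin d → ℤ) → ℝ≥0∞ :=
      fun ν => MNorm Φ₀₁ (fun n => wFun W₂ b (n, ν) ^ r₀) with hPdef
    have hc't : ENNReal.ofReal Cw ^ r₀ ≠ ∞ :=
      ENNReal.rpow_ne_top_of_nonneg hr0.le ENNReal.ofReal_ne_top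
    have hAfin : ∀ j, A j ≠ ∞ := fun j =>
      ENNReal.rpow_ne_top_of_nonneg hr0.le
        (ENNReal.mul_ne_top ENNReal.coe_ne_top ENNReal.ofReal_ne_top)
    have hSAfin : (∑' j, A j) ≠ ∞ := by
      intro htop
      apply ha
      rw [show ellRNorm r₀ W₁ a = (∑' j, A j) ^ (1 / r₀) from rfl, htop,
        ENNReal.top_rpow_of_pos (by positivity)]
    have hAbar_fin : ∀ κ, (∑' k, A (k, κ)) ≠ ∞ := by
      intro κ htop
      apply hSAfin
      have hle : (∑' k, A (k, κ)) ≤ ∑' κ', ∑' k, A (k, κ') :=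
        ENNReal.le_tsum (f := fun κ' => ∑' k, A (k, κ')) κ
      rw [htop] at hle
      have : (∑' κ', ∑' k, A (k, κ')) = ∑' j, A j := by
        rw [ENNReal.tsum_comm, ← ENNReal.tsum_prod']
      rw [this] at hle
      exact top_le_iff.mp hle
    have hinner : ∀ ν, MNorm Φ₀₁ (fun n => wFun W₀ (discConv a b) (n, ν) ^ r₀) ≤
        ENNReal.ofReal Cw ^ r₀ * (2 * ∑' κ, (∑' k, A (k, κ)) * P (ν - κ)) := by
      intro ν
      calc MNorm Φ₀₁ (fun n => wFun W₀ (discConv a b) (n, ν) ^ r₀)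
          ≤ MNorm Φ₀₁ (fun n => ENNReal.ofReal Cw ^ r₀ *
              ∑' j : IdxD d, A j * wFun W₂ b (n - j.1, ν - j.2) ^ r₀) := by
            apply MNorm_mono Φ₀₁
            intro n
            have := ptw hr0 hr1 a b W₀ W₁ W₂ (fun j => (hw₁.1 _).le) hCw0.le hWmod (n, ν)
            exact this
        _ = ENNReal.ofReal Cw ^ r₀ * MNorm Φ₀₁ (fun n =>
              ∑' j : IdxD d, A j * wFun W₂ b (n - j.1, ν - j.2) ^ r₀) :=
            MNorm_smul Φ₀₁ _ _ hc't
        _ ≤ ENNReal.ofReal Cw ^ r₀ * (2 * ∑' j : IdxD d,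
              MNorm Φ₀₁ (fun n => A j * wFun W₂ b (n - j.1, ν - j.2) ^ r₀)) :=
            mul_le_mul_right (MNorm_tsum_le Φ₀₁ fun j n => A j * wFun W₂ b (n - j.1, ν - j.2) ^ r₀) _
        _ = ENNReal.ofReal Cw ^ r₀ * (2 * ∑' j : IdxD d, A j * P (ν - j.2)) := by
            congr 2
            refine tsum_congr fun j => ?_
            rw [MNorm_smul Φ₀₁ _ _ (hAfin j),
              MNorm_translate Φ₀₁ (fun m => wFun W₂ b (m, ν - j.2) ^ r₀) j.1]
        _ = ENNReal.ofReal Cw ^ r₀ * (2 * ∑' κ, (∑' k, A (k, κ)) * P (ν - κ)) := by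
            congr 2
            rw [ENNReal.tsum_prod']
            rw [ENNReal.tsum_comm]
            refine tsum_congr fun κ => ?_
            show (∑' k, A (k, κ) * P (ν - κ)) = (∑' k, A (k, κ)) * P (ν - κ)
            exact ENNReal.tsum_mul_right
    have houter : MNorm Φ₀₂ (fun ν => MNorm Φ₀₁ (fun n => wFun W₀ (discConv a b) (n, ν) ^ r₀)) ≤
        ENNReal.ofReal Cw ^ r₀ * (4 * ((∑' j, A j) * MNorm Φ₀₂ P)) := by
      calc MNorm Φ₀₂ (fun ν => MNorm Φ₀₁ (fun n => wFun W₀ (discConv a b) (n, ν) ^ r₀))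
          ≤ MNorm Φ₀₂ (fun ν => (ENNReal.ofReal Cw ^ r₀ * 2) *
              ∑' κ, (∑' k, A (k, κ)) * P (ν - κ)) := by
            apply MNorm_mono Φ₀₂
            intro ν
            rw [mul_assoc]
            exact hinner ν
        _ = (ENNReal.ofReal Cw ^ r₀ * 2) *
              MNorm Φ₀₂ (fun ν => ∑' κ, (∑' k, A (k, κ)) * P (ν - κ)) :=
            MNorm_smul Φ₀₂ _ _ (ENNReal.mul_ne_top hc't ENNReal.ofNat_ne_top)
        _ ≤ (ENNReal.ofReal Cw ^ r₀ * 2) *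
              (2 * ∑' κ, MNorm Φ₀₂ (fun ν => (∑' k, A (k, κ)) * P (ν - κ))) :=
            mul_le_mul_right (MNorm_tsum_le Φ₀₂ fun κ ν => (∑' k, A (k, κ)) * P (ν - κ)) _
        _ = (ENNReal.ofReal Cw ^ r₀ * 2) * (2 * ∑' κ, (∑' k, A (k, κ)) * MNorm Φ₀₂ P) := by
            congr 2
            refine tsum_congr fun κ => ?_
            rw [MNorm_smul Φ₀₂ _ _ (hAbar_fin κ), MNorm_translate Φ₀₂ P κ]
        _ = ENNReal.ofReal Cw ^ r₀ * (4 * ((∑' j, A j) * MNorm Φ₀₂ P)) := by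
            rw [ENNReal.tsum_mul_right]
            rw [show (∑' κ, ∑' k, A (k, κ)) = ∑' j, A j by
              rw [ENNReal.tsum_comm, ← ENNReal.tsum_prod']]
            ring
    have hseq0 : seqNorm d Φ₁ Φ₂ W₀ (discConv a b)
        = MNorm Φ₀₂ (fun ν => MNorm Φ₀₁
            (fun n => wFun W₀ (discConv a b) (n, ν) ^ r₀)) ^ (1 / r₀) :=
      mixed_eq_MNorm Φ₀₁ Φ₀₂ hr0 hΦ₀₁ hΦ₀₂ _
    have hseq2 : seqNorm d Φ₁ Φ₂ W₂ b = MNorm Φ₀₂ P ^ (1 / r₀) :=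
      mixed_eq_MNorm Φ₀₁ Φ₀₂ hr0 hΦ₀₁ hΦ₀₂ _
    have hellR : ellRNorm r₀ W₁ a = (∑' j, A j) ^ (1 / r₀) := rfl
    rw [hseq0, hseq2, hellR]
    calc MNorm Φ₀₂ (fun ν => MNorm Φ₀₁
            (fun n => wFun W₀ (discConv a b) (n, ν) ^ r₀)) ^ (1 / r₀)
        ≤ (ENNReal.ofReal Cw ^ r₀ * (4 * ((∑' j, A j) * MNorm Φ₀₂ P))) ^ (1 / r₀) :=
          ENNReal.rpow_le_rpow houter (by positivity)
      _ = ENNReal.ofReal (Cw * 4 ^ (1 / r₀)) * (∑' j, A j) ^ (1 / r₀)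
            * MNorm Φ₀₂ P ^ (1 / r₀) := by
          rw [ENNReal.mul_rpow_of_nonneg _ _ (by positivity),
            ENNReal.mul_rpow_of_nonneg _ _ (by positivity),
            ENNReal.mul_rpow_of_nonneg _ _ (by positivity), hcancel',
            ENNReal.ofReal_mul hCw0.le,
            ← ENNReal.ofReal_rpow_of_pos (by norm_num : (0:ℝ) < 4),
            ENNReal.ofReal_ofNat]
          ring

end
end
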